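/- arXiv:1412.7589 — 11 statements merged into one kernel-verified Lean document; each statement's English description precedes it below -/
import Mathlib

section
/- Let ABC be a projective triangle, and let F1, F2 on line AB and E1, E2 on line CA satisfy (AB F1 F2) = (CA E1 E2) = -1. Then the two diagonal points D1, D2 of the quadrangle {E1, E2, F1, F2} different from A lie on line BC and satisfy (BC D1 D2) = -1. -/
open Matrix

/-- Points (and, dually, lines) of the real projective plane are represented by
nonzero vectors of `ℝ³`; `dot3` is the incidence pairing. -/
def dot3 (u v : Fin 3 → ℝ) : ℝ := u 0 * v 0 + u 1 * v 1 + u 2 * v 2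

/-- The (projective points represented by) three vectors are collinear: some nonzero
line form vanishes on all of them. -/
def Coll (a b c : Fin 3 → ℝ) : Prop :=
  ∃ l : Fin 3 → ℝ, l ≠ 0 ∧ dot3 l a = 0 ∧ dot3 l b = 0 ∧ dot3 l c = 0

/-- `CRv a b c d k`: the cross ratio `(abcd)` of four collinear projective points
(represented by the given vectors) equals `k`.  Writing `c = x•a + y•b` and
`d = z•a + w•b`, the cross ratio is `(y/x)/(w/z) = (y*z)/(x*w)`; this value is
independent of the chosen representative vectors. -/
def CRv (a b c d : Fin 3 → ℝ) (k : ℝ) : Prop :=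
  ∃ x y z w : ℝ, c = x • a + y • b ∧ d = z • a + w • b ∧ x * w ≠ 0 ∧
    k = (y * z) / (x * w)

lemma dot3_comb2 (l u v : Fin 3 → ℝ) (x y : ℝ) :
    dot3 l (x • u + y • v) = x * dot3 l u + y * dot3 l v := by
  simp [dot3]; ring

lemma dot3_comb3 (l u v w : Fin 3 → ℝ) (x y z : ℝ) :
    dot3 l (x • u + y • v + z • w) = x * dot3 l u + y * dot3 l v + z * dot3 l w := by
  simp [dot3]; ring

/-- cross product of two vectors in `ℝ³` -/
def cp (u v : Fin 3 → ℝ) : Fin 3 → ℝ :=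
  ![u 1 * v 2 - u 2 * v 1, u 2 * v 0 - u 0 * v 2, u 0 * v 1 - u 1 * v 0]

lemma dot3_cp_left (u v : Fin 3 → ℝ) : dot3 (cp u v) u = 0 := by simp [dot3, cp]; ring

lemma dot3_cp_right (u v : Fin 3 → ℝ) : dot3 (cp u v) v = 0 := by simp [dot3, cp]; ring

lemma det_eq_cp (A B C : Fin 3 → ℝ) :
    (Matrix.of ![A, B, C]).det = dot3 (cp B C) A := by
  simp [Matrix.det_fin_three, dot3, cp]; ring

lemma det_ne_of_notColl (A B C : Fin 3 → ℝ) (hABC : ¬Coll A B C) :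
    (Matrix.of ![A, B, C]).det ≠ 0 := by
  intro hdet
  obtain ⟨v, hv0, hv⟩ := (Matrix.exists_mulVec_eq_zero_iff).mpr hdet
  refine hABC ⟨v, hv0, ?_, ?_, ?_⟩
  · have := congrFun hv 0
    simpa [Matrix.mulVec, dotProduct, Fin.sum_univ_three, dot3, mul_comm] using this
  · have := congrFun hv 1
    simpa [Matrix.mulVec, dotProduct, Fin.sum_univ_three, dot3, mul_comm] using this
  · have := congrFun hv 2
    simpa [Matrix.mulVec, dotProduct, Fin.sum_univ_three, dot3, mul_comm] using this

/-- A nondegenerate triangle gives a basis: every vector decomposes over `A, B, C`. -/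
lemma decomp3 (A B C v : Fin 3 → ℝ) (hABC : ¬Coll A B C) :
    ∃ a b c : ℝ, v = a • A + b • B + c • C := by
  have hdet := det_ne_of_notColl A B C hABC
  set M : Matrix (Fin 3) (Fin 3) ℝ := Matrix.of ![A, B, C] with hM
  have hdet' : IsUnit M.transpose.det := by
    rw [Matrix.det_transpose]; exact isUnit_iff_ne_zero.mpr hdet
  set c : Fin 3 → ℝ := M.transpose⁻¹ *ᵥ v with hc
  have h1 : M.transpose *ᵥ c = v := by
    rw [hc, Matrix.mulVec_mulVec, Matrix.mul_nonsing_inv _ hdet', Matrix.one_mulVec]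
  refine ⟨c 0, c 1, c 2, ?_⟩
  funext i
  rw [← h1]
  simp [Matrix.mulVec, dotProduct, Fin.sum_univ_three, Matrix.transpose_apply, hM]
  fin_cases i <;> simp <;> ring

/-- The key line-incidence equation: if `D = d0•A + d1•B + d2•C` is collinear with
`E = p•C + q•A` and `F = z•A + w•B`, then `d0*w*p - d1*z*p - d2*q*w = 0`. -/
lemma lineq (A B C D : Fin 3 → ℝ) (hABC : ¬Coll A B C)
    (p q z w d0 d1 d2 : ℝ) (hp : p ≠ 0) (hw : w ≠ 0)
    (hCol : Coll (p • C + q • A) (z • A + w • B) D)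
    (hD : D = d0 • A + d1 • B + d2 • C) :
    d0 * w * p - d1 * z * p - d2 * q * w = 0 := by
  obtain ⟨l, hl0, h1, h2, h3⟩ := hCol
  set a := dot3 l A with ha
  set b := dot3 l B with hb
  set c := dot3 l C with hcc
  rw [dot3_comb2] at h1 h2
  rw [hD, dot3_comb3] at h3
  have hane : a ≠ 0 := by
    intro ha0
    have hc0 : c = 0 :=
      (mul_eq_zero.mp (show p * c = 0 by linear_combination h1 - q * ha0)).resolve_left hp
    have hb0 : b = 0 :=
      (mul_eq_zero.mp (show w * b = 0 by linear_combination h2 - z * ha0)).resolve_left hw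
    exact hABC ⟨l, hl0, ha0, hb0, hc0⟩
  have key : a * (d0 * w * p - d1 * z * p - d2 * q * w) = 0 := by
    linear_combination w * p * h3 - d1 * p * h2 - d2 * w * h1
  exact (mul_eq_zero.mp key).resolve_left hane

/-- Harmonic sets on the sides of a triangle: let `ABC` be a projective triangle and let
`F1, F2` on line `AB` and `E1, E2` on line `CA` satisfy `(AB F1 F2) = (CA E1 E2) = -1`.
Then the two diagonal points `D1 = E1F2 ∩ E2F1` and `D2 = E1F1 ∩ E2F2` of the quadrangle
`{E1,E2,F1,F2}` different from `A` lie on the line `BC` and satisfy `(BC D1 D2) = -1`. -/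
theorem harmonic_sets_on_sides (A B C E1 E2 F1 F2 D1 D2 : Fin 3 → ℝ)
    (hABC : ¬Coll A B C)
    (hF : CRv A B F1 F2 (-1))
    (hE : CRv C A E1 E2 (-1))
    (hD1 : D1 ≠ 0) (hD1a : Coll E1 F2 D1) (hD1b : Coll E2 F1 D1)
    (hD2 : D2 ≠ 0) (hD2a : Coll E1 F1 D2) (hD2b : Coll E2 F2 D2) :
    Coll B C D1 ∧ Coll B C D2 ∧ CRv B C D1 D2 (-1) := by
  obtain ⟨x, y, z, w, hF1e, hF2e, hxw, hkF⟩ := hF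
  obtain ⟨p, q, r, s, hE1e, hE2e, hps, hkE⟩ := hE
  have hx : x ≠ 0 := left_ne_zero_of_mul hxw
  have hw : w ≠ 0 := right_ne_zero_of_mul hxw
  have hp : p ≠ 0 := left_ne_zero_of_mul hps
  have hs : s ≠ 0 := right_ne_zero_of_mul hps
  have hyz : y * z = -(x * w) := by field_simp at hkF; linarith
  have hqr : q * r = -(p * s) := by field_simp at hkE; linarith
  have hyzne : y * z ≠ 0 := by rw [hyz]; exact neg_ne_zero.mpr hxw
  have hqrne : q * r ≠ 0 := by rw [hqr]; exact neg_ne_zero.mpr hps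
  have hy : y ≠ 0 := left_ne_zero_of_mul hyzne
  have hz : z ≠ 0 := right_ne_zero_of_mul hyzne
  have hq : q ≠ 0 := left_ne_zero_of_mul hqrne
  have hr : r ≠ 0 := right_ne_zero_of_mul hqrne
  obtain ⟨d0, d1, d2, hD1e⟩ := decomp3 A B C D1 hABC
  obtain ⟨e0, e1, e2, hD2e⟩ := decomp3 A B C D2 hABC
  rw [hE1e, hF2e] at hD1a
  rw [hE2e, hF1e] at hD1b
  rw [hE1e, hF1e] at hD2a
  rw [hE2e, hF2e] at hD2b
  have L1 := lineq A B C D1 hABC p q z w d0 d1 d2 hp hw hD1a hD1e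
  have L2 := lineq A B C D1 hABC r s x y d0 d1 d2 hr hy hD1b hD1e
  have L3 := lineq A B C D2 hABC p q x y e0 e1 e2 hp hy hD2a hD2e
  have L4 := lineq A B C D2 hABC r s z w e0 e1 e2 hr hw hD2b hD2e
  -- the two diagonal-point relations
  have hd : d1 * r * x + d2 * s * y = 0 := by
    have h2 : (2 * p * w) * (d1 * r * x + d2 * s * y) = 0 := by
      linear_combination y * r * L1 - w * p * L2 + d1 * r * p * hyz + d2 * w * y * hqr
    exact (mul_eq_zero.mp h2).resolve_left
      (mul_ne_zero (mul_ne_zero two_ne_zero hp) hw)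
  have hd0 : d0 = 0 := by
    have h2 : (y * r) * d0 = 0 := by linear_combination L2 + hd
    exact (mul_eq_zero.mp h2).resolve_left (mul_ne_zero hy hr)
  have he : e1 * r * x - e2 * s * y = 0 := by
    have h2 : (2 * p * w) * (e1 * r * x - e2 * s * y) = 0 := by
      linear_combination y * p * L4 - w * r * L3 + e1 * p * r * hyz - e2 * w * y * hqr
    exact (mul_eq_zero.mp h2).resolve_left
      (mul_ne_zero (mul_ne_zero two_ne_zero hp) hw)
  have he0 : e0 = 0 := by
    have h2 : (y * p * s) * e0 = 0 := by linear_combination s * L3 - q * he + e1 * x * hqr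
    exact (mul_eq_zero.mp h2).resolve_left (mul_ne_zero (mul_ne_zero hy hp) hs)
  have hD1' : D1 = d1 • B + d2 • C := by rw [hD1e, hd0]; simp
  have hD2' : D2 = e1 • B + e2 • C := by rw [hD2e, he0]; simp
  -- nonvanishing of the coefficients
  have hd1 : d1 ≠ 0 := by
    intro h
    have hd2 : d2 = 0 := by
      have : d2 * (s * y) = 0 := by linear_combination hd - r * x * h
      exact (mul_eq_zero.mp this).resolve_right (mul_ne_zero hs hy)
    exact hD1 (by rw [hD1', h, hd2]; simp)
  have hd2 : d2 ≠ 0 := by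
    intro h
    have hd1' : d1 = 0 := by
      have : d1 * (r * x) = 0 := by linear_combination hd - s * y * h
      exact (mul_eq_zero.mp this).resolve_right (mul_ne_zero hr hx)
    exact hD1 (by rw [hD1', h, hd1']; simp)
  have he2 : e2 ≠ 0 := by
    intro h
    have he1 : e1 = 0 := by
      have : e1 * (r * x) = 0 := by linear_combination he + s * y * h
      exact (mul_eq_zero.mp this).resolve_right (mul_ne_zero hr hx)
    exact hD2 (by rw [hD2', h, he1]; simp)
  -- the line BC
  have hdet := det_ne_of_notColl A B C hABC
  have hcpA : dot3 (cp B C) A ≠ 0 := by rw [← det_eq_cp]; exact hdet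
  have hcpne : cp B C ≠ 0 := by
    intro h
    apply hcpA
    rw [h]
    simp [dot3]
  have hCollBC : ∀ u v : ℝ, ∀ D : Fin 3 → ℝ, D = u • B + v • C → Coll B C D := by
    intro u v D hDe
    refine ⟨cp B C, hcpne, dot3_cp_left B C, dot3_cp_right B C, ?_⟩
    rw [hDe, dot3_comb2, dot3_cp_left, dot3_cp_right]
    ring
  refine ⟨hCollBC d1 d2 D1 hD1', hCollBC e1 e2 D2 hD2', ?_⟩
  -- the cross ratio
  refine ⟨d1, d2, e1, e2, hD1', hD2', mul_ne_zero hd1 he2, ?_⟩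
  have hkey : d2 * e1 = -(d1 * e2) := by
    have h2 : (r * x * s * y) * (d2 * e1 + d1 * e2) = 0 := by
      linear_combination e1 * r * x * hd - d1 * r * x * he
    have := (mul_eq_zero.mp h2).resolve_left
      (mul_ne_zero (mul_ne_zero (mul_ne_zero hr hx) hs) hy)
    linarith
  rw [hkey, neg_div, div_self (mul_ne_zero hd1 he2)]
end

section
/- Let p be a line not tangent to a nondegenerate conic Φ, meeting Φ in points U, V, and let A, B be points of p different from U, V. If C, D are points on p with (ABCD) = (UVCD) = -1, then {C, D} is exactly the pair of midpoints of the segment AB with respect to Φ (i.e., the pair {Q, Q_p} where Q, Q_p are harmonic conjugates with respect to both {A,B} and {U,V}). -/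
/-- Cross ratio `(ABCD)` of four points of a (complex) projective line, given in an
affine coordinate on the line in which all the relevant points are finite. -/
noncomputable def crC (a b c d : ℂ) : ℂ := ((c - a) / (c - b)) / ((d - a) / (d - b))

/-- From a harmonic cross ratio we get the symmetric polynomial relation. -/
lemma crC_harm {a b c d : ℂ} (h : crC a b c d = -1) :
    (c - a) * (d - b) + (d - a) * (c - b) = 0 := by
  unfold crC at h
  have h4 : (d - a) / (d - b) ≠ 0 := by
    intro h0; rw [h0, div_zero] at h; exact (by norm_num : (0:ℂ) ≠ -1) h
  have hda : d - a ≠ 0 := by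
    intro h0; exact h4 (by rw [h0, zero_div])
  have hdb : d - b ≠ 0 := by
    intro h0; exact h4 (by rw [h0, div_zero])
  have h3 : (c - a) / (c - b) ≠ 0 := by
    intro h0; rw [h0, zero_div] at h; exact (by norm_num : (0:ℂ) ≠ -1) h
  have hcb : c - b ≠ 0 := by
    intro h0; exact h3 (by rw [h0, div_zero])
  field_simp at h
  linear_combination h

/-- Characterization of midpoints: on a line `p` (not tangent to the conic `Φ`) meeting
`Φ` at `U, V`, with `A, B` points of `p` different from `U, V`, if `C, D` satisfy
`(ABCD) = (UVCD) = -1` then `{C,D}` is exactly the pair of midpoints `{Q, Q_p}` of the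
segment `AB`, i.e. the pair which is harmonically conjugate with respect to both `{A,B}`
and `{U,V}`.  (Conjugacy on `p` with respect to `Φ` is harmonic conjugation about `U,V`.) -/
theorem midpoints_unique (U V A B C D Q Qp : ℂ)
    (hUV : U ≠ V) (hAU : A ≠ U) (hAV : A ≠ V) (hBU : B ≠ U) (hBV : B ≠ V) (hAB : A ≠ B)
    (hCD1 : crC A B C D = -1) (hCD2 : crC U V C D = -1)
    (hQ1 : crC A B Q Qp = -1) (hQ2 : crC U V Q Qp = -1) :
    (C = Q ∧ D = Qp) ∨ (C = Qp ∧ D = Q) := by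
  have e1 := crC_harm hCD1
  have e2 := crC_harm hCD2
  have e3 := crC_harm hQ1
  have e4 := crC_harm hQ2
  by_cases hs : A + B = U + V
  · -- then A*B = U*V, so {A,B} = {U,V}, contradiction
    exfalso
    have hp : A * B = U * V := by linear_combination (e1 - e2) / 2 + ((C + D) / 2) * hs
    have h0 : (A - U) * (A - V) = 0 := by linear_combination A * hs - hp
    rcases mul_eq_zero.mp h0 with h | h
    · exact hAU (sub_eq_zero.mp h)
    · exact hAV (sub_eq_zero.mp h)
  · have key : (A + B - (U + V)) * (C + D) = (A + B - (U + V)) * (Q + Qp) := by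
      linear_combination -e1 + e2 + e3 - e4
    have hsum : C + D = Q + Qp :=
      mul_left_cancel₀ (sub_ne_zero.mpr hs) key
    have hprod : C * D = Q * Qp := by
      linear_combination (e1 - e3) / 2 + ((A + B) / 2) * hsum
    have hCQ : (C - Q) * (C - Qp) = 0 := by
      linear_combination C * hsum - hprod
    rcases mul_eq_zero.mp hCQ with h | h
    · left
      have hc : C = Q := sub_eq_zero.mp h
      exact ⟨hc, by linear_combination hsum - hc⟩
    · right
      have hc : C = Qp := sub_eq_zero.mp h
      exact ⟨hc, by linear_combination hsum - hc⟩
end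

section
/- Let A, B be two points not on the conic Φ such that the line p = AB is not tangent to Φ. Then the midpoints of segment AB with respect to Φ coincide with the midpoints of segment A_p B_p, where A_p, B_p are the conjugate points of A, B on p. -/
/-- The midpoints of `AB` are also the midpoints of `A_p B_p`.  Here the line `p = AB`
meets the conic at `U, V`; the conjugate point of `X ∈ p` is the harmonic conjugate of
`X` with respect to `U, V`; and midpoints of a segment are the pair of points
harmonically conjugate with respect to both the endpoints and `{U,V}`. -/
theorem midpoints_of_conjugates (U V A B Ap Bp Q Qp : ℂ)
    (hUV : U ≠ V) (hAU : A ≠ U) (hAV : A ≠ V) (hBU : B ≠ U) (hBV : B ≠ V) (hAB : A ≠ B)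
    (hAp : crC U V A Ap = -1) (hBp : crC U V B Bp = -1)
    (hQ1 : crC A B Q Qp = -1) (hQ2 : crC U V Q Qp = -1) :
    crC Ap Bp Q Qp = -1 := by
  have huv : U - V ≠ 0 := sub_ne_zero.mpr hUV
  have hApU : Ap ≠ U := by rintro rfl; simp [crC, sub_self] at hAp
  have hApV : Ap ≠ V := by rintro rfl; simp [crC, sub_self] at hAp
  have hBpU : Bp ≠ U := by rintro rfl; simp [crC, sub_self] at hBp
  have hBpV : Bp ≠ V := by rintro rfl; simp [crC, sub_self] at hBp
  have hQU : Q ≠ U := by rintro rfl; simp [crC, sub_self] at hQ2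
  have hQV : Q ≠ V := by rintro rfl; simp [crC, sub_self] at hQ2
  have hQpU : Qp ≠ U := by rintro rfl; simp [crC, sub_self] at hQ2
  have hQpV : Qp ≠ V := by rintro rfl; simp [crC, sub_self] at hQ2
  have hQA : Q ≠ A := by rintro rfl; simp [crC, sub_self] at hQ1
  have hQB : Q ≠ B := by rintro rfl; simp [crC, sub_self] at hQ1
  have hQpA : Qp ≠ A := by rintro rfl; simp [crC, sub_self] at hQ1
  have hQpB : Qp ≠ B := by rintro rfl; simp [crC, sub_self] at hQ1
  rw [crC] at hAp hBp hQ1 hQ2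
  field_simp [sub_ne_zero.mpr hAV, sub_ne_zero.mpr hApU, sub_ne_zero.mpr hApV] at hAp
  field_simp [sub_ne_zero.mpr hBV, sub_ne_zero.mpr hBpU, sub_ne_zero.mpr hBpV] at hBp
  field_simp [sub_ne_zero.mpr hQB, sub_ne_zero.mpr hQpA, sub_ne_zero.mpr hQpB] at hQ1
  field_simp [sub_ne_zero.mpr hQV, sub_ne_zero.mpr hQpU, sub_ne_zero.mpr hQpV] at hQ2
  have E1 : Ap*(2*A-U-V) = A*(U+V)-2*U*V := by linear_combination hAp
  have E2 : Bp*(2*B-U-V) = B*(U+V)-2*U*V := by linear_combination hBp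
  have E4 : Qp*(2*Q-U-V) = Q*(U+V)-2*U*V := by linear_combination hQ2
  have P3 : (Q-A)*(Qp-B)+(Q-B)*(Qp-A) = 0 := by linear_combination hQ1
  have hd : ∀ X : ℂ, 2*X-U-V = 0 → X*(U+V)-2*U*V = 0 → False := fun X h h2 =>
    huv (pow_eq_zero_iff two_ne_zero |>.mp (by linear_combination 2*h2 - (U+V)*h : (U-V)^2 = 0))
  have hdA : 2*A-U-V ≠ 0 := fun h => hd A h (by linear_combination -E1 + Ap*h)
  have hdB : 2*B-U-V ≠ 0 := fun h => hd B h (by linear_combination -E2 + Bp*h)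
  have hdQ : 2*Q-U-V ≠ 0 := fun h => hd Q h (by linear_combination -E4 + Qp*h)
  have hQpAp : Qp ≠ Ap := by
    intro h; rw [← h] at E1
    have h5 : (A-Q)*(2*Qp-(U+V)) = 0 := by linear_combination E1 - E4
    rcases mul_eq_zero.mp h5 with h6 | h6
    · exact hQA (sub_eq_zero.mp h6).symm
    · exact hd Qp (by linear_combination h6) (by linear_combination -E4 + Q*h6)
  have hQpBp : Qp ≠ Bp := by
    intro h; rw [← h] at E2
    have h5 : (B-Q)*(2*Qp-(U+V)) = 0 := by linear_combination E2 - E4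
    rcases mul_eq_zero.mp h5 with h6 | h6
    · exact hQB (sub_eq_zero.mp h6).symm
    · exact hd Qp (by linear_combination h6) (by linear_combination -E4 + Q*h6)
  have hQBp : Q ≠ Bp := by
    intro h; rw [← h] at E2
    have h7 : (Qp - B)*(2*Q-U-V) = 0 := by linear_combination E4 - E2
    rcases mul_eq_zero.mp h7 with h6 | h6
    · exact hQpB (sub_eq_zero.mp h6)
    · exact hdQ h6
  have T : ((Q-Ap)*(Qp-Bp) + (Q-Bp)*(Qp-Ap)) * ((2*A-U-V)*(2*B-U-V)) = 0 := by
    linear_combination ((U-V)^2) * P3 + (4*A*B - 2*(U+V)*(A+B) + 4*U*V) * E4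
      + ((2*B-U-V)*(2*Bp-Q-Qp)) * E1 + (2*(A*(U+V)-2*U*V) - (2*A-U-V)*(Q+Qp)) * E2
  have main : (Q-Ap)*(Qp-Bp) + (Q-Bp)*(Qp-Ap) = 0 := by
    rcases mul_eq_zero.mp T with h | h
    · exact h
    · exact absurd h (mul_ne_zero hdA hdB)
  rw [crC]
  field_simp [sub_ne_zero.mpr hQBp, sub_ne_zero.mpr hQpAp, sub_ne_zero.mpr hQpBp]
  linear_combination main
end

section
/- Let p be a projective line not tangent to a nondegenerate conic Φ, let U, V be its intersection points with Φ, and let A, B be points of p different from U, V. Then 4·(AB B_p A_p) = (UVAB) + (UVBA) + 2, where A_p, B_p are the conjugate points of A, B on p. -/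
noncomputable def conicPolar (U V x y : ℂ) : ℂ := (x - U) * (y - V) + (x - V) * (y - U)

lemma conicPolar_comm (U V x y : ℂ) : conicPolar U V x y = conicPolar U V y x := by
  unfold conicPolar; ring

lemma conicPolar_self_ne_zero {U V x : ℂ} (hU : x ≠ U) (hV : x ≠ V) :
    conicPolar U V x x ≠ 0 := by
  have : conicPolar U V x x = 2 * ((x - U) * (x - V)) := by unfold conicPolar; ring
  rw [this]
  exact mul_ne_zero two_ne_zero (mul_ne_zero (sub_ne_zero.2 hU) (sub_ne_zero.2 hV))

lemma conicPolar_eq_zero_of_crC_eq_neg_one {U V X Y : ℂ} (h : crC U V X Y = -1) :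
    conicPolar U V X Y = 0 := by
  -- `crC` vanishes as soon as a denominator does, so `-1` rules out every degenerate position.
  have hne : crC U V X Y ≠ 0 := by rw [h]; norm_num
  simp only [crC, div_ne_zero_iff, sub_ne_zero] at hne
  obtain ⟨⟨-, hXV⟩, hYU, -⟩ := hne
  unfold crC at h
  rw [div_div_div_eq, div_eq_iff (mul_ne_zero (sub_ne_zero.2 hXV) (sub_ne_zero.2 hYU))] at h
  unfold conicPolar
  linear_combination h

lemma sub_div_sub_of_conicPolar_eq_zero {U V X Y : ℂ} (hU : X ≠ U) (hV : X ≠ V)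
    (hXY : conicPolar U V X Y = 0) (Z : ℂ) :
    (Y - Z) / (Y - X) = conicPolar U V Z X / conicPolar U V X X := by
  have hXX := conicPolar_self_ne_zero hU hV
  have hYX : Y - X ≠ 0 := by
    rintro hYX
    rw [sub_eq_zero.1 hYX] at hXY
    exact hXX hXY
  rw [div_eq_div_iff hYX hXX]
  unfold conicPolar at hXY ⊢
  linear_combination (X - Z) * hXY

-- No case split on `A_p = B` is needed: there both sides are `0` by the convention `x / 0 = 0`.
lemma crC_eq_of_conicPolar_eq_zero {U V A B Ap Bp : ℂ} (hAU : A ≠ U) (hAV : A ≠ V)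
    (hBU : B ≠ U) (hBV : B ≠ V)
    (hAp : conicPolar U V A Ap = 0) (hBp : conicPolar U V B Bp = 0) :
    crC A B Bp Ap =
      conicPolar U V A B ^ 2 / (conicPolar U V A A * conicPolar U V B B) := by
  rw [crC, sub_div_sub_of_conicPolar_eq_zero hBU hBV hBp, ← inv_div (Ap - B),
    sub_div_sub_of_conicPolar_eq_zero hAU hAV hAp, conicPolar_comm U V B A, div_inv_eq_mul]
  ring

lemma crC_add_crC_swap_add_two {U V A B : ℂ} (hAU : A ≠ U) (hAV : A ≠ V) (hBU : B ≠ U)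
    (hBV : B ≠ V) :
    crC U V A B + crC U V B A + 2 =
      4 * (conicPolar U V A B ^ 2 / (conicPolar U V A A * conicPolar U V B B)) := by
  have := sub_ne_zero.2 hAU
  have := sub_ne_zero.2 hAV
  have := sub_ne_zero.2 hBU
  have := sub_ne_zero.2 hBV
  unfold crC conicPolar
  field_simp
  ring

theorem four_crossRatio_identity_general (U V A B Ap Bp : ℂ)
    (hAU : A ≠ U) (hAV : A ≠ V) (hBU : B ≠ U) (hBV : B ≠ V)
    (hAp : crC U V A Ap = -1) (hBp : crC U V B Bp = -1) :
    4 * crC A B Bp Ap = crC U V A B + crC U V B A + 2 := by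
  rw [crC_add_crC_swap_add_two hAU hAV hBU hBV,
    crC_eq_of_conicPolar_eq_zero hAU hAV hBU hBV (conicPolar_eq_zero_of_crC_eq_neg_one hAp)
      (conicPolar_eq_zero_of_crC_eq_neg_one hBp)]

/-- Santaló's identity: on a line meeting the conic at `U, V`, with `A, B` different
from `U, V` and conjugate points `A_p, B_p` (harmonic conjugates with respect to `U,V`),
one has `4·(AB B_p A_p) = (UVAB) + (UVBA) + 2`. -/
theorem four_crossRatio_identity (U V A B Ap Bp : ℂ)
    (hUV : U ≠ V) (hAU : A ≠ U) (hAV : A ≠ V) (hBU : B ≠ U) (hBV : B ≠ V) (hAB : A ≠ B)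
    (hAp : crC U V A Ap = -1) (hBp : crC U V B Bp = -1) :
    4 * crC A B Bp Ap = crC U V A B + crC U V B A + 2 :=
  four_crossRatio_identity_general U V A B Ap Bp hAU hAV hBU hBV hAp hBp
end

section
/- Let A, B be two interior points of a real conic Φ (the Cayley–Klein hyperbolic plane), and let A_p, B_p be their conjugate points on line p = AB. Then (AB B_p A_p) = cosh²‖AB‖, where ‖AB‖ = (1/2)·log(UVAB) is the hyperbolic distance and U, V are the intersections of p with Φ. -/
/-!
The cross ratio is invariant under affine changes of coordinate, so we may move the
intersections `U, V` of the line with the absolute to `-1, 1`. There the conjugate of an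
interior point `x` is `1 / x`, and both sides of the identity become the rational function
`(1 - a b)² / ((1 - a²)(1 - b²))` of the coordinates `a, b` of `A, B`.
-/

/-- Cross ratio `(ABCD)` of four collinear points, given in an affine coordinate on
their common line. -/
noncomputable def cr (a b c d : ℝ) : ℝ := ((c - a) / (c - b)) / ((d - a) / (d - b))

open Set Real

theorem cr_affine (α β a b c d : ℝ) (hα : α ≠ 0) :
    cr (α * a + β) (α * b + β) (α * c + β) (α * d + β) = cr a b c d := by
  have hsub : ∀ x y : ℝ, (α * x + β) - (α * y + β) = α * (x - y) := fun _ _ => by ring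
  simp only [cr, hsub, mul_div_mul_left _ _ hα]

noncomputable def absoluteCoord (U V x : ℝ) : ℝ := (2 * x - U - V) / (V - U)

section absoluteCoord

variable {U V : ℝ}

theorem cr_absoluteCoord (hUV : U ≠ V) (a b c d : ℝ) :
    cr (absoluteCoord U V a) (absoluteCoord U V b) (absoluteCoord U V c)
      (absoluteCoord U V d) = cr a b c d := by
  have hVU : V - U ≠ 0 := sub_ne_zero.2 hUV.symm
  have haff : ∀ x, absoluteCoord U V x = 2 / (V - U) * x + -(U + V) / (V - U) :=
    fun x => by simp only [absoluteCoord]; field_simp; ring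
  simp only [haff]
  exact cr_affine _ _ a b c d (div_ne_zero two_ne_zero hVU)

theorem absoluteCoord_left (hUV : U ≠ V) : absoluteCoord U V U = -1 := by
  rw [absoluteCoord, div_eq_iff (sub_ne_zero.2 hUV.symm)]
  ring

theorem absoluteCoord_right (hUV : U ≠ V) : absoluteCoord U V V = 1 := by
  rw [absoluteCoord, div_eq_iff (sub_ne_zero.2 hUV.symm)]
  ring

theorem absoluteCoord_mem_Ioo {x : ℝ} (hx : x ∈ Ioo U V) :
    absoluteCoord U V x ∈ Ioo (-1) 1 := by
  obtain ⟨hUx, hxV⟩ := hx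
  have hVU : 0 < V - U := sub_pos.2 (hUx.trans hxV)
  constructor
  · rw [absoluteCoord, lt_div_iff₀ hVU]; linarith
  · rw [absoluteCoord, div_lt_iff₀ hVU]; linarith

end absoluteCoord

theorem mul_eq_one_of_cr_eq_neg_one {x y : ℝ} (h : cr (-1) 1 x y = -1) : x * y = 1 := by
  have hx₁ : x - 1 ≠ 0 := fun h0 => by simp [cr, h0] at h
  have hy₁ : y - 1 ≠ 0 := fun h0 => by simp [cr, h0] at h
  have hx₂ : x + 1 ≠ 0 := fun h0 => by simp [cr, h0] at h
  have hy₂ : y + 1 ≠ 0 := fun h0 => by simp [cr, h0] at h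
  simp only [cr, sub_neg_eq_add] at h
  field_simp at h
  linarith

theorem cosh_half_mul_log_sq {t : ℝ} (ht : 0 < t) :
    cosh (1 / 2 * log t) ^ 2 = (t + 1) ^ 2 / (4 * t) := by
  have hdouble := cosh_two_mul (1 / 2 * log t)
  rw [show 2 * (1 / 2 * log t) = log t by ring, sinh_sq, cosh_log ht] at hdouble
  rw [show cosh (1 / 2 * log t) ^ 2 = ((t + t⁻¹) / 2 + 1) / 2 by linarith]
  field_simp
  ring

section unitChart

variable {a b : ℝ}

theorem cr_neg_one_one_pos (ha : a ∈ Ioo (-1) 1) (hb : b ∈ Ioo (-1) 1) :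
    0 < cr (-1) 1 a b := by
  obtain ⟨ha₁, ha₂⟩ := ha
  obtain ⟨hb₁, hb₂⟩ := hb
  simp only [cr, sub_neg_eq_add]
  exact div_pos_of_neg_of_neg (div_neg_of_pos_of_neg (by linarith) (by linarith))
    (div_neg_of_pos_of_neg (by linarith) (by linarith))

theorem cr_inv_inv_eq (ha : a ∈ Ioo (-1) 1) (hb : b ∈ Ioo (-1) 1) (ha₀ : a ≠ 0) (hb₀ : b ≠ 0) :
    cr a b b⁻¹ a⁻¹ = (1 - a * b) ^ 2 / ((1 - a ^ 2) * (1 - b ^ 2)) := by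
  obtain ⟨ha₁, ha₂⟩ := ha
  obtain ⟨hb₁, hb₂⟩ := hb
  have hab : 1 - a * b ≠ 0 := by nlinarith
  have ha₂' : 1 - a ^ 2 ≠ 0 := by nlinarith
  have hb₂' : 1 - b ^ 2 ≠ 0 := by nlinarith
  have hinv : ∀ x y : ℝ, x ≠ 0 → x⁻¹ - y = (1 - x * y) / x := fun x y hx => by field_simp
  simp only [cr, hinv _ _ ha₀, hinv _ _ hb₀]
  field_simp

theorem cr_neg_one_one_add_one_sq_div (ha : a ∈ Ioo (-1) 1) (hb : b ∈ Ioo (-1) 1) :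
    (cr (-1) 1 a b + 1) ^ 2 / (4 * cr (-1) 1 a b) =
      (1 - a * b) ^ 2 / ((1 - a ^ 2) * (1 - b ^ 2)) := by
  obtain ⟨ha₁, ha₂⟩ := ha
  obtain ⟨hb₁, hb₂⟩ := hb
  have ha₁' : a + 1 ≠ 0 := by linarith
  have ha₂' : a - 1 ≠ 0 := by linarith
  have hb₁' : b + 1 ≠ 0 := by linarith
  have hb₂' : b - 1 ≠ 0 := by linarith
  have ha₃ : 1 - a ^ 2 ≠ 0 := by nlinarith
  have hb₃ : 1 - b ^ 2 ≠ 0 := by nlinarith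
  simp only [cr, sub_neg_eq_add]
  field_simp
  ring

end unitChart

/-- Interior points lie strictly between `U` and `V` in an affine coordinate on the line `p`;
the conjugate `X_p` of a point `X` of `p` is its harmonic conjugate with respect to `U, V`. -/
theorem crossRatio_eq_cosh_sq_dist_general (U V A B Ap Bp : ℝ)
    (hA : A ∈ Set.Ioo U V) (hB : B ∈ Set.Ioo U V)
    (hAp : cr U V A Ap = -1) (hBp : cr U V B Bp = -1) :
    cr A B Bp Ap = Real.cosh ((1 / 2) * Real.log (cr U V A B)) ^ 2 := by
  have hUV : U ≠ V := (hA.1.trans hA.2).ne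
  have hcr : ∀ a b c d, cr a b c d = cr (absoluteCoord U V a) (absoluteCoord U V b)
      (absoluteCoord U V c) (absoluteCoord U V d) :=
    fun a b c d => (cr_absoluteCoord hUV a b c d).symm
  have hU := absoluteCoord_left hUV
  have hV := absoluteCoord_right hUV
  rw [hcr, hU, hV] at hAp hBp
  have ha := absoluteCoord_mem_Ioo hA
  have hb := absoluteCoord_mem_Ioo hB
  have hAAp := mul_eq_one_of_cr_eq_neg_one hAp
  have hBBp := mul_eq_one_of_cr_eq_neg_one hBp
  rw [hcr A, hcr U, hU, hV, eq_inv_of_mul_eq_one_right hAAp, eq_inv_of_mul_eq_one_right hBBp,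
    cosh_half_mul_log_sq (cr_neg_one_one_pos ha hb),
    cr_inv_inv_eq ha hb (left_ne_zero_of_mul_eq_one hAAp) (left_ne_zero_of_mul_eq_one hBBp),
    cr_neg_one_one_add_one_sq_div ha hb]

/-- Cayley–Klein hyperbolic plane: on a line meeting the real absolute conic at `U, V`,
with interior points `A, B` (i.e. between `U` and `V` in an affine chart) and conjugate
points `A_p, B_p` (harmonic conjugates with respect to `U, V`), one has
`(AB B_p A_p) = cosh² ‖AB‖` where `‖AB‖ = (1/2)·log (UVAB)` is the hyperbolic distance. -/
theorem crossRatio_eq_cosh_sq_dist (U V A B Ap Bp : ℝ) (hUV : U < V)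
    (hA : A ∈ Set.Ioo U V) (hB : B ∈ Set.Ioo U V) (hAB : A ≠ B)
    (hAp : cr U V A Ap = -1) (hBp : cr U V B Bp = -1) :
    cr A B Bp Ap = Real.cosh ((1 / 2) * Real.log (cr U V A B)) ^ 2 :=
  crossRatio_eq_cosh_sq_dist_general U V A B Ap Bp hA hB hAp hBp
end

section
/- Let Φ be an imaginary conic defining the elliptic plane, A, B two points, U, V the (imaginary) intersections of line AB with Φ, and A_p, B_p the conjugate points of A, B. Then (AB B_p A_p) = cos²‖AB‖, where ‖AB‖ = (1/(2i))·log(UVAB). -/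
open Complex

theorem cos_sq_one_div_two_I_mul_log {c : ℂ} (hc : c ≠ 0) :
    cos (1 / (2 * I) * log c) ^ 2 = (c + 1) ^ 2 / (4 * c) := by
  have hdouble : 2 * (1 / (2 * I) * log c) = -(log c * I) := by
    field_simp
    rw [I_sq]
    ring
  rw [cos_sq, hdouble, cos_neg, cos_mul_I, cosh, exp_neg, exp_log hc]
  field_simp
  ring

/-- On a line meeting the absolute conic at `u, v`, the conjugate point of `a` is its harmonic
conjugate `a'` with respect to `u, v`. -/
def IsHarmonic (u v a a' : ℂ) : Prop := crC u v a a' = -1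

namespace IsHarmonic

variable {u v a a' : ℂ}

/-- In a degenerate configuration one of the quotients in `crC` vanishes (as `x / 0 = 0`), so the
cross ratio is `0`, not `-1`. -/
theorem sub_ne_zero (h : IsHarmonic u v a a') :
    a - u ≠ 0 ∧ a - v ≠ 0 ∧ a' - u ≠ 0 ∧ a' - v ≠ 0 := by
  have hne : ∀ x y : ℂ, x / y = -1 → x / y ≠ 0 := fun x y hxy => by simp [hxy]
  obtain ⟨hl, hr⟩ := div_ne_zero_iff.mp (hne _ _ h)
  exact ⟨(div_ne_zero_iff.mp hl).1, (div_ne_zero_iff.mp hl).2,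
    (div_ne_zero_iff.mp hr).1, (div_ne_zero_iff.mp hr).2⟩

theorem mul_add_mul_eq_zero (h : IsHarmonic u v a a') :
    (a - u) * (a' - v) + (a - v) * (a' - u) = 0 := by
  obtain ⟨hau, hav, hu, hv⟩ := h.sub_ne_zero
  unfold IsHarmonic crC at h
  field_simp at h
  linear_combination h

/-- Both sides vanish when `b = a'`, the right one since then its denominator is `0`. -/
theorem sub_div_sub (h : IsHarmonic u v a a') (b : ℂ) :
    (a' - a) / (a' - b) = 2 * (a - u) * (a - v) / ((a - u) * (b - v) + (a - v) * (b - u)) := by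
  obtain ⟨hau, hav, -, -⟩ := h.sub_ne_zero
  have hrel := h.mul_add_mul_eq_zero
  have hk : 2 * a - u - v ≠ 0 := by
    intro hk
    have : 2 * ((a - u) * (a - v)) = 0 := by linear_combination hrel - (a' - a) * hk
    simp_all [sub_eq_zero]
  have hnum : (a' - a) * (u + v - 2 * a) = 2 * (a - u) * (a - v) := by
    linear_combination -hrel
  have hden : (a' - b) * (u + v - 2 * a) = (a - u) * (b - v) + (a - v) * (b - u) := by
    linear_combination -hrel
  rw [← hnum, ← hden, mul_div_mul_right _ _ (by contrapose! hk; linear_combination -hk)]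

end IsHarmonic

theorem crossRatio_eq_cos_sq_dist_general (U V A B Ap Bp : ℂ)
    (hAp : crC U V A Ap = -1) (hBp : crC U V B Bp = -1) :
    crC A B Bp Ap =
      Complex.cos ((1 / (2 * Complex.I)) * Complex.log (crC U V A B)) ^ 2 := by
  obtain ⟨hAU, hAV, -, -⟩ := IsHarmonic.sub_ne_zero hAp
  obtain ⟨hBU, hBV, -, -⟩ := IsHarmonic.sub_ne_zero hBp
  have hc : crC U V A B ≠ 0 := div_ne_zero (div_ne_zero hAU hAV) (div_ne_zero hBU hBV)
  rw [cos_sq_one_div_two_I_mul_log hc, crC, ← inv_div (Bp - B), IsHarmonic.sub_div_sub hAp,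
    IsHarmonic.sub_div_sub hBp, crC]
  field_simp
  ring

/-- Cayley–Klein elliptic plane: the absolute conic is imaginary, so a real line meets
it at a pair of conjugate non-real points `U, V = conj U`.  For real points `A, B` with
conjugate points `A_p, B_p` (harmonic conjugates with respect to `U, V`), one has
`(AB B_p A_p) = cos² ‖AB‖` where `‖AB‖ = (1/(2i))·log (UVAB)` is the elliptic distance. -/
theorem crossRatio_eq_cos_sq_dist (U V A B Ap Bp : ℂ)
    (hU : U.im ≠ 0) (hV : V = (starRingEnd ℂ) U)
    (hA : A.im = 0) (hB : B.im = 0) (hAB : A ≠ B)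
    (hAp : crC U V A Ap = -1) (hBp : crC U V B Bp = -1) :
    crC A B Bp Ap =
      Complex.cos ((1 / (2 * Complex.I)) * Complex.log (crC U V A B)) ^ 2 :=
  crossRatio_eq_cos_sq_dist_general U V A B Ap Bp hAp hBp
end

section
/- In the Cayley–Klein hyperbolic plane, the three altitudes of a triangle (the line through each vertex perpendicular to the opposite side, i.e., joining the vertex to the pole of the opposite side) are concurrent in the projective plane. -/
open Matrix

/-!
Use the vertices `A, B, C` as a basis and let `N` be the inverse of their Gram matrix for the
form `M`. The pole of the side opposite the `i`-th vertex has coordinates proportional to the `i`-th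
row of `N`, so the altitude from `eᵢ` passes through `(N₀₁N₀₂, N₁₀N₁₂, N₂₀N₂₁)` because `N` is
symmetric. This point is nonzero: otherwise two off-diagonal entries of `N` vanish, and some row of
`N` is a multiple of `eᵢ`, i.e. some pole coincides with its vertex.
-/

lemma dot3_eq_dotProduct (u v : Fin 3 → ℝ) : dot3 u v = u ⬝ᵥ v := by
  simp [dot3, dotProduct, Fin.sum_univ_three]

lemma coll_of_det_eq_zero {a b c : Fin 3 → ℝ} (h : det (of ![a, b, c]) = 0) : Coll a b c := by
  obtain ⟨l, hl, hla⟩ := exists_mulVec_eq_zero_iff.mpr h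
  refine ⟨l, hl, ?_, ?_, ?_⟩ <;> rw [dot3_eq_dotProduct, dotProduct_comm]
  · exact congrFun hla 0
  · exact congrFun hla 1
  · exact congrFun hla 2

lemma coll_vecMul_of_det_eq_zero {x y z : Fin 3 → ℝ} (P : Matrix (Fin 3) (Fin 3) ℝ)
    (h : det (of ![x, y, z]) = 0) : Coll (x ᵥ* P) (y ᵥ* P) (z ᵥ* P) := by
  apply coll_of_det_eq_zero
  have hrows : of ![x ᵥ* P, y ᵥ* P, z ᵥ* P] = of ![x, y, z] * P := by
    ext i j; fin_cases i <;> rfl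
  rw [hrows, det_mul, h, zero_mul]

section Gram

variable {n K : Type*} [Fintype n] [Field K]

lemma Matrix.IsSymm.mul_mul_transpose {M : Matrix n n K} (hM : M.IsSymm) (P : Matrix n n K) :
    (P * M * Pᵀ).IsSymm := by
  simp only [IsSymm, transpose_mul, transpose_transpose, hM.eq, Matrix.mul_assoc]

variable [DecidableEq n]

/-- `P * M * Pᵀ` is the Gram matrix of the rows of `P` for the form `M`. -/
lemma eq_smul_inv_gram_row {M P : Matrix n n K} (hM : M.IsSymm) (hG : IsUnit (P * M * Pᵀ).det)
    {i : n} {x v : n → K} (hx : x ᵥ* P = v) (hconj : ∀ j, j ≠ i → P j ⬝ᵥ M *ᵥ v = 0) :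
    x = (P i ⬝ᵥ M *ᵥ v) • (P * M * Pᵀ)⁻¹ i := by
  set G := P * M * Pᵀ
  set s := P i ⬝ᵥ M *ᵥ v
  have hGx : G *ᵥ x = Pi.single i s := by
    have : G *ᵥ x = P *ᵥ M *ᵥ v := by
      simp only [G, ← hx, mulVec_mulVec, ← mulVec_transpose, Matrix.mul_assoc]
    rw [this]
    ext j
    by_cases hj : j = i
    · subst hj; simp [s, mulVec]
    · simp [hj, hconj j hj, mulVec]
  have hGinv : G⁻¹.IsSymm := (hM.mul_mul_transpose P).inv
  calc x = G⁻¹ *ᵥ G *ᵥ x := by rw [mulVec_mulVec, nonsing_inv_mul _ hG, one_mulVec]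
    _ = s • G⁻¹ i := by
      rw [hGx]; ext j; simp [hGinv.apply i j, mul_comm]

end Gram

def orthocenterCoord (N : Matrix (Fin 3) (Fin 3) ℝ) : Fin 3 → ℝ :=
  ![N 0 1 * N 0 2, N 1 0 * N 1 2, N 2 0 * N 2 1]

lemma det_single_row_orthocenterCoord {N : Matrix (Fin 3) (Fin 3) ℝ} (hN : N.IsSymm) (i : Fin 3)
    (s : ℝ) : det (of ![Pi.single i 1, s • N i, orthocenterCoord N]) = 0 := by
  have h := hN.apply
  fin_cases i <;> simp [det_fin_three, orthocenterCoord, h 0 1, h 0 2, h 1 2] <;> ring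

lemma orthocenterCoord_ne_zero {N : Matrix (Fin 3) (Fin 3) ℝ} (hN : N.IsSymm)
    (hrow : ∀ i (t : ℝ), N i ≠ t • Pi.single i 1) : orthocenterCoord N ≠ 0 := by
  have hoff : ∀ i, ¬∀ j, j ≠ i → N i j = 0 := fun i hi => hrow i (N i i) <| by
    ext j
    rcases eq_or_ne j i with rfl | hj
    · simp
    · simp [hj, hi j hj]
  intro h
  have h0 : N 0 1 * N 0 2 = 0 := congrFun h 0
  have h1 : N 0 1 * N 1 2 = 0 := by rw [← hN.apply 0 1]; exact congrFun h 1
  have h2 : N 0 2 * N 1 2 = 0 := by rw [← hN.apply 0 2, ← hN.apply 1 2]; exact congrFun h 2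
  rcases mul_eq_zero.1 h0 with h01 | h02
  · rcases mul_eq_zero.1 h2 with h02 | h12
    · exact hoff 0 fun j hj => by fin_cases j <;> simp_all
    · exact hoff 1 fun j hj => by fin_cases j <;> simp_all [hN.apply 1 0]
  · rcases mul_eq_zero.1 h1 with h01 | h12
    · exact hoff 0 fun j hj => by fin_cases j <;> simp_all
    · exact hoff 2 fun j hj => by fin_cases j <;> simp_all [hN.apply 2 0, hN.apply 2 1]

theorem exists_coll_vertex_pole {M P : Matrix (Fin 3) (Fin 3) ℝ} {V : Fin 3 → Fin 3 → ℝ}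
    (hM : M.IsSymm) (hMdet : M.det ≠ 0) (hP : P.det ≠ 0)
    (hconj : ∀ i j, j ≠ i → P j ⬝ᵥ M *ᵥ V i = 0)
    (hV : ∀ i (t : ℝ), V i ≠ t • P i) :
    ∃ H ≠ 0, ∀ i, Coll (P i) (V i) H := by
  have hPu : IsUnit P := (isUnit_iff_isUnit_det P).mpr hP.isUnit
  have hG : IsUnit (P * M * Pᵀ).det := by
    simpa [det_mul, det_transpose] using mul_ne_zero (mul_ne_zero hP hMdet) hP
  set N := (P * M * Pᵀ)⁻¹
  have hrow : ∀ i, Pi.single i 1 ᵥ* P = P i := fun i => single_one_vecMul i P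
  have hpole : ∀ i, ∃ s : ℝ, V i = (s • N i) ᵥ* P := by
    intro i
    have hx : (V i ᵥ* P⁻¹) ᵥ* P = V i := by
      rw [vecMul_vecMul, nonsing_inv_mul _ hP.isUnit, vecMul_one]
    exact ⟨_, by rw [← eq_smul_inv_gram_row hM hG hx (hconj i), hx]⟩
  refine ⟨orthocenterCoord N ᵥ* P, ?_, fun i => ?_⟩
  · rw [Ne, ← zero_vecMul P, (vecMul_injective_of_isUnit hPu).eq_iff]
    refine orthocenterCoord_ne_zero ((hM.mul_mul_transpose P).inv) fun i t hNi => ?_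
    obtain ⟨s, hs⟩ := hpole i
    exact hV i (s * t) (by rw [hs, hNi, smul_smul, smul_vecMul, hrow])
  · obtain ⟨s, hs⟩ := hpole i
    rw [← hrow i, hs]
    exact coll_vecMul_of_det_eq_zero P
      (det_single_row_orthocenterCoord (hM.mul_mul_transpose P).inv i _)

theorem altitudes_concurrent_general (M : Matrix (Fin 3) (Fin 3) ℝ)
    (hsymm : M.IsSymm) (hdet : M.det ≠ 0)
    (A B C A' B' C' : Fin 3 → ℝ)
    (hABC : ¬Coll A B C)
    (hA'B : dot3 B (M.mulVec A') = 0) (hA'C : dot3 C (M.mulVec A') = 0)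
    (hB'C : dot3 C (M.mulVec B') = 0) (hB'A : dot3 A (M.mulVec B') = 0)
    (hC'A : dot3 A (M.mulVec C') = 0) (hC'B : dot3 B (M.mulVec C') = 0)
    (hAA' : ∀ t : ℝ, A' ≠ t • A) (hBB' : ∀ t : ℝ, B' ≠ t • B)
    (hCC' : ∀ t : ℝ, C' ≠ t • C) :
    ∃ H : Fin 3 → ℝ, H ≠ 0 ∧ Coll A A' H ∧ Coll B B' H ∧ Coll C C' H := by
  have hP : (of ![A, B, C]).det ≠ 0 := fun h => hABC (coll_of_det_eq_zero h)
  have hconj : ∀ i j, j ≠ i → of ![A, B, C] j ⬝ᵥ M *ᵥ ![A', B', C'] i = 0 := by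
    simp only [← dot3_eq_dotProduct]
    intro i j hji
    fin_cases i <;> fin_cases j <;> first | exact absurd rfl hji | assumption
  have hV : ∀ i (t : ℝ), ![A', B', C'] i ≠ t • of ![A, B, C] i := by
    intro i; fin_cases i <;> assumption
  obtain ⟨H, hH, hcoll⟩ := exists_coll_vertex_pole hsymm hdet hP hconj hV
  exact ⟨H, hH, hcoll 0, hcoll 1, hcoll 2⟩

/-- Concurrency of the altitudes of a triangle in the Cayley–Klein plane (a shadow of
Chasles' polar-triangle theorem): if `A', B', C'` are the poles of the sides `BC, CA, AB`
of a triangle `ABC` with respect to a nondegenerate conic `M` (triangle and polar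
triangle in general position, no vertex on the conic), then the altitudes `AA'`, `BB'`,
`CC'` are concurrent in the projective plane. -/
theorem altitudes_concurrent (M : Matrix (Fin 3) (Fin 3) ℝ)
    (hsymm : M.IsSymm) (hdet : M.det ≠ 0)
    (A B C A' B' C' : Fin 3 → ℝ)
    (hABC : ¬Coll A B C)
    (hAc : dot3 A (M.mulVec A) ≠ 0) (hBc : dot3 B (M.mulVec B) ≠ 0)
    (hCc : dot3 C (M.mulVec C) ≠ 0)
    (hA' : A' ≠ 0) (hA'B : dot3 B (M.mulVec A') = 0) (hA'C : dot3 C (M.mulVec A') = 0)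
    (hB' : B' ≠ 0) (hB'C : dot3 C (M.mulVec B') = 0) (hB'A : dot3 A (M.mulVec B') = 0)
    (hC' : C' ≠ 0) (hC'A : dot3 A (M.mulVec C') = 0) (hC'B : dot3 B (M.mulVec C') = 0)
    (hAA' : ∀ t : ℝ, A' ≠ t • A) (hBB' : ∀ t : ℝ, B' ≠ t • B)
    (hCC' : ∀ t : ℝ, C' ≠ t • C) :
    ∃ H : Fin 3 → ℝ, H ≠ 0 ∧ Coll A A' H ∧ Coll B B' H ∧ Coll C C' H :=
  altitudes_concurrent_general M hsymm hdet A B C A' B' C' hABC hA'B hA'C hB'C hB'A hC'A hC'B hAA'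
    hBB' hCC'
end

section
/- Let ABC be a projective triangle in general position with respect to a conic Φ, with polar triangle A'B'C'. Suppose the midpoints D of BC, E of CA, F of AB are chosen noncollinear; let D_a, E_b, F_c be the other midpoints. Then D_a, E, F are collinear, and D, D_a are the diagonal points different from A of the quadrangle {E, E_b, F, F_c}. -/
open Matrix

/-- `Midpoints M X Y D D'`: with respect to the conic with (symmetric, nondegenerate)
matrix `M`, the pair `{D, D'}` is the pair of midpoints of the segment `XY`:
both lie on the line `XY`, they are conjugate to each other with respect to the conic,
and they are harmonic conjugates with respect to `X, Y`.  (Equivalently, they are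
harmonically conjugate both with respect to `{X,Y}` and with respect to the
intersection pair of the line `XY` with the conic.) -/
def Midpoints (M : Matrix (Fin 3) (Fin 3) ℝ) (X Y D D' : Fin 3 → ℝ) : Prop :=
  Coll X Y D ∧ Coll X Y D' ∧ dot3 D (M.mulVec D') = 0 ∧ CRv X Y D D' (-1)

lemma mulVec3 (a b c l : Fin 3 → ℝ) :
    (Matrix.of ![a, b, c]).mulVec l = ![dot3 l a, dot3 l b, dot3 l c] := by
  funext i
  fin_cases i <;>
    simp [Matrix.mulVec, dotProduct, Fin.sum_univ_three, dot3] <;> ring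

lemma coll_iff_det (a b c : Fin 3 → ℝ) :
    Coll a b c ↔ (Matrix.of ![a, b, c]).det = 0 := by
  rw [← Matrix.exists_mulVec_eq_zero_iff]
  constructor
  · rintro ⟨l, hl, h1, h2, h3⟩
    exact ⟨l, hl, by rw [mulVec3, h1, h2, h3]; funext i; fin_cases i <;> simp⟩
  · rintro ⟨l, hl, h⟩
    rw [mulVec3] at h
    have h0 := congrFun h 0
    have h1 := congrFun h 1
    have h2 := congrFun h 2
    simp at h0 h1 h2
    exact ⟨l, hl, h0, h1, h2⟩

lemma dot3_expand (M : Matrix (Fin 3) (Fin 3) ℝ) (hsymm : M.IsSymm)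
    (x y z w : ℝ) (B C : Fin 3 → ℝ) :
    dot3 (x • B + y • C) (M.mulVec (z • B + w • C)) =
      x * z * dot3 B (M.mulVec B) + (x * w + y * z) * dot3 B (M.mulVec C) +
        y * w * dot3 C (M.mulVec C) := by
  have h01 := hsymm.apply 0 1
  have h02 := hsymm.apply 0 2
  have h12 := hsymm.apply 1 2
  simp only [dot3, Matrix.mulVec, dotProduct, Fin.sum_univ_three,
    Pi.add_apply, Pi.smul_apply, smul_eq_mul]
  rw [h01, h02, h12]
  ring

lemma det_comb (A B C : Fin 3 → ℝ) (p q r t u v : ℝ) :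
    (Matrix.of ![p • (B + t • C), q • (C + u • A), r • (A + v • B)]).det =
      p * q * r * (1 + t * u * v) * (Matrix.of ![A, B, C]).det := by
  simp only [Matrix.det_fin_three, Matrix.of_apply, Matrix.cons_val', Matrix.cons_val_zero,
    Matrix.cons_val_one, Matrix.head_cons, Matrix.empty_val', Matrix.cons_val_fin_one,
    Matrix.head_fin_const, Matrix.cons_val_two, Matrix.tail_cons,
    Pi.add_apply, Pi.smul_apply, smul_eq_mul]
  ring

lemma mid_repr (M : Matrix (Fin 3) (Fin 3) ℝ) (hsymm : M.IsSymm) (X Y D D' : Fin 3 → ℝ)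
    (h : Midpoints M X Y D D') :
    ∃ t p q : ℝ, p ≠ 0 ∧ q ≠ 0 ∧ D = p • (X + t • Y) ∧ D' = q • (X + (-t) • Y) ∧
      t ^ 2 * dot3 Y (M.mulVec Y) = dot3 X (M.mulVec X) := by
  obtain ⟨-, -, hconj, x, y, z, w, hDe, hD'e, hxw, hk⟩ := h
  have hx : x ≠ 0 := fun h => hxw (by simp [h])
  have hw : w ≠ 0 := fun h => hxw (by simp [h])
  have hyz : y * z = -(x * w) := by
    field_simp at hk; linarith
  have hy : y ≠ 0 := by
    intro h; rw [h] at hyz; simp at hyz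
    exact hxw (by rcases hyz with h | h <;> simp [h])
  have hz : z ≠ 0 := by
    intro h; rw [h] at hyz; simp at hyz
    exact hxw (by rcases hyz with h | h <;> simp [h])
  rw [hDe, hD'e, dot3_expand M hsymm] at hconj
  refine ⟨y / x, x, z, hx, hz, ?_, ?_, ?_⟩
  · rw [hDe, smul_add, smul_smul, mul_div_cancel₀ _ hx]
  · have hzw : z * -(y / x) = w := by
      field_simp
      linear_combination -hyz
    rw [hD'e, smul_add, smul_smul, hzw]
  · have key : y ^ 2 * dot3 Y (M.mulVec Y) * w = x ^ 2 * dot3 X (M.mulVec X) * w := by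
      linear_combination y * hconj -
        (x * dot3 X (M.mulVec X) + y * dot3 X (M.mulVec Y)) * hyz
    have key2 := mul_right_cancel₀ hw key
    field_simp
    linear_combination key2

/-- Structure of the midpoints of a triangle (via Pascal's theorem): if the midpoints
`D ∈ BC`, `E ∈ CA`, `F ∈ AB` are chosen noncollinear and `D_a, E_b, F_c` are the other
midpoints, then `D_a, E, F` are collinear and `D, D_a` are the two diagonal points
different from `A` of the quadrangle `{E, E_b, F, F_c}`. -/
theorem midpoints_structure (M : Matrix (Fin 3) (Fin 3) ℝ)
    (hsymm : M.IsSymm) (hdet : M.det ≠ 0)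
    (A B C A' B' C' D Da E Eb F Fc : Fin 3 → ℝ)
    (hABC : ¬Coll A B C)
    (hAc : dot3 A (M.mulVec A) ≠ 0) (hBc : dot3 B (M.mulVec B) ≠ 0)
    (hCc : dot3 C (M.mulVec C) ≠ 0)
    (hA' : A' ≠ 0) (hA'B : dot3 B (M.mulVec A') = 0) (hA'C : dot3 C (M.mulVec A') = 0)
    (hB' : B' ≠ 0) (hB'C : dot3 C (M.mulVec B') = 0) (hB'A : dot3 A (M.mulVec B') = 0)
    (hC' : C' ≠ 0) (hC'A : dot3 A (M.mulVec C') = 0) (hC'B : dot3 B (M.mulVec C') = 0)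
    (hA'c : dot3 A' (M.mulVec A') ≠ 0) (hB'c : dot3 B' (M.mulVec B') ≠ 0)
    (hC'c : dot3 C' (M.mulVec C') ≠ 0)
    (htana : ¬Coll B C A') (htanb : ¬Coll C A B') (htanc : ¬Coll A B C')
    (hD : Midpoints M B C D Da) (hE : Midpoints M C A E Eb) (hF : Midpoints M A B F Fc)
    (hDEF : ¬Coll D E F) :
    Coll Da E F ∧ Coll Da Eb Fc ∧ Coll D E Fc ∧ Coll D Eb F := by
  obtain ⟨t, p, p', hp, hp', hDr, hDar, ht⟩ := mid_repr M hsymm B C D Da hD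
  obtain ⟨u, q, q', hq, hq', hEr, hEbr, hu⟩ := mid_repr M hsymm C A E Eb hE
  obtain ⟨v, r, r', hr, hr', hFr, hFcr, hv⟩ := mid_repr M hsymm A B F Fc hF
  set α := dot3 A (M.mulVec A)
  set β := dot3 B (M.mulVec B)
  set γ := dot3 C (M.mulVec C)
  -- (tuv)^2 = 1
  have hsq : ((t * u * v) ^ 2 - 1) * (α * β * γ) = 0 := by
    linear_combination (u ^ 2 * v ^ 2 * α * β) * ht + (v ^ 2 * β * β) * hu +
      (β * γ) * hv
  have hsq1 : (t * u * v) ^ 2 = 1 := by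
    have hne : α * β * γ ≠ 0 := by
      simp only [mul_ne_zero_iff]; exact ⟨⟨hAc, hBc⟩, hCc⟩
    have := mul_eq_zero.mp hsq
    rcases this with h | h
    · linarith [sub_eq_zero.mp h]
    · exact absurd h hne
  -- hDEF forces tuv = 1
  have hDEFdet : (Matrix.of ![D, E, F]).det ≠ 0 := fun h => hDEF ((coll_iff_det D E F).mpr h)
  have hdEF : (Matrix.of ![D, E, F]).det = p * q * r * (1 + t * u * v) * (Matrix.of ![A, B, C]).det := by
    rw [hDr, hEr, hFr]; exact det_comb A B C p q r t u v
  have htuv1 : 1 + t * u * v ≠ 0 := by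
    intro h
    apply hDEFdet
    rw [hdEF, h]; ring
  have htuv : t * u * v = 1 := by
    have : (t * u * v - 1) * (t * u * v + 1) = 0 := by linear_combination hsq1
    rcases mul_eq_zero.mp this with h | h
    · linarith [sub_eq_zero.mp h]
    · exact absurd (by linarith) htuv1
  refine ⟨?_, ?_, ?_, ?_⟩
  · rw [coll_iff_det, hDar, hEr, hFr, det_comb]
    linear_combination (-(p' * q * r * (Matrix.of ![A, B, C]).det)) * htuv
  · rw [coll_iff_det, hDar, hEbr, hFcr, det_comb]
    linear_combination (-(p' * q' * r' * (Matrix.of ![A, B, C]).det)) * htuv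
  · rw [coll_iff_det, hDr, hEr, hFcr, det_comb]
    linear_combination (-(p * q * r' * (Matrix.of ![A, B, C]).det)) * htuv
  · rw [coll_iff_det, hDr, hEbr, hFr, det_comb]
    linear_combination (-(p * q' * r * (Matrix.of ![A, B, C]).det)) * htuv
end

section
/- Let ABC be a projective triangle in general position with respect to a conic Φ with polar triangle A'B'C', and let D, E, F be noncollinear chosen midpoints of BC, CA, AB. Then the side bisectors A'D, B'E, C'F are concurrent. -/
open Matrix

lemma dot3_comm (u v : Fin 3 → ℝ) : dot3 u v = dot3 v u := by simp [dot3]; ring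

lemma dot3_symmM (M : Matrix (Fin 3) (Fin 3) ℝ) (hs : M.IsSymm) (u v : Fin 3 → ℝ) :
    dot3 u (M.mulVec v) = dot3 v (M.mulVec u) := by
  have h01 : M 1 0 = M 0 1 := hs.apply 0 1
  have h02 : M 2 0 = M 0 2 := hs.apply 0 2
  have h12 : M 2 1 = M 1 2 := hs.apply 1 2
  simp [dot3, Matrix.mulVec, dotProduct, Fin.sum_univ_three]
  rw [h01, h02, h12]; ring

lemma dot3_right (M : Matrix (Fin 3) (Fin 3) ℝ) (u B C : Fin 3 → ℝ) (x y : ℝ) :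
    dot3 u (M.mulVec (x•B + y•C)) = x * dot3 u (M.mulVec B) + y * dot3 u (M.mulVec C) := by
  simp [dot3, Matrix.mulVec, dotProduct, Fin.sum_univ_three]; ring

lemma dot3_left (u B C : Fin 3 → ℝ) (x y : ℝ) :
    dot3 (x•B + y•C) u = x * dot3 B u + y * dot3 C u := by
  simp [dot3]; ring

lemma rowsMul (A B C v : Fin 3 → ℝ) :
    (Matrix.of ![A,B,C]).mulVec v = ![dot3 A v, dot3 B v, dot3 C v] := by
  funext i; fin_cases i <;>
    simp [Matrix.mulVec, dotProduct, dot3, Fin.sum_univ_three]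

lemma vecMulRows (A B C c : Fin 3 → ℝ) :
    Matrix.vecMul c (Matrix.of ![A,B,C]) = c 0 • A + c 1 • B + c 2 • C := by
  funext j; simp [Matrix.vecMul, dotProduct, Fin.sum_univ_three]

lemma mulVec_inv_cancel (N : Matrix (Fin 3) (Fin 3) ℝ) (h : N.det ≠ 0) (v : Fin 3 → ℝ) :
    N.mulVec (N⁻¹.mulVec v) = v := by
  rw [Matrix.mulVec_mulVec, Matrix.mul_nonsing_inv _ (isUnit_iff_ne_zero.mpr h),
    Matrix.one_mulVec]

lemma inv_mulVec_cancel (N : Matrix (Fin 3) (Fin 3) ℝ) (h : N.det ≠ 0) (v : Fin 3 → ℝ) :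
    N⁻¹.mulVec (N.mulVec v) = v := by
  rw [Matrix.mulVec_mulVec, Matrix.nonsing_inv_mul _ (isUnit_iff_ne_zero.mpr h),
    Matrix.one_mulVec]

/-- From the midpoint data on a side `XY` extract normalized coordinates. -/
lemma midpoint_coords (M : Matrix (Fin 3) (Fin 3) ℝ) (hsymm : M.IsSymm)
    (X Y D D' : Fin 3 → ℝ) (h : Midpoints M X Y D D') :
    ∃ x y z w : ℝ, D = x • X + y • Y ∧ D' = z • X + w • Y ∧
      x ≠ 0 ∧ y ≠ 0 ∧ z ≠ 0 ∧ w ≠ 0 ∧ y * z = -(x * w) ∧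
      x^2 * dot3 X (M.mulVec X) = y^2 * dot3 Y (M.mulVec Y) := by
  obtain ⟨-, -, hconj, x, y, z, w, h4, h5, hxw, hk⟩ := h
  have hx : x ≠ 0 := (mul_ne_zero_iff.mp hxw).1
  have hw : w ≠ 0 := (mul_ne_zero_iff.mp hxw).2
  have hyz : y * z = -(x * w) := by field_simp at hk; linarith
  have hy : y ≠ 0 := by
    intro h0; apply hxw
    have : -(x*w) = 0 := by rw [← hyz, h0]; ring
    linarith
  have hz : z ≠ 0 := by
    intro h0; apply hxw
    have : -(x*w) = 0 := by rw [← hyz, h0]; ring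
    linarith
  refine ⟨x, y, z, w, h4, h5, hx, hy, hz, hw, hyz, ?_⟩
  rw [h4, h5, dot3_left, dot3_right, dot3_right, dot3_symmM M hsymm Y X] at hconj
  have hw0 : w * (x^2 * dot3 X (M.mulVec X) - y^2 * dot3 Y (M.mulVec Y)) = 0 := by
    linear_combination (-y) * hconj + (y * dot3 X (M.mulVec Y) + x * dot3 X (M.mulVec X)) * hyz
  rcases mul_eq_zero.mp hw0 with h0 | h0
  · exact absurd h0 hw
  · linarith

/-- Concurrence of the side bisectors: for a triangle `ABC` in general position with
respect to a nondegenerate conic, with polar triangle `A'B'C'` and noncollinear chosen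
midpoints `D ∈ BC`, `E ∈ CA`, `F ∈ AB`, the side bisectors `A'D`, `B'E`, `C'F` are
concurrent. -/
theorem side_bisectors_concurrent (M : Matrix (Fin 3) (Fin 3) ℝ)
    (hsymm : M.IsSymm) (hdet : M.det ≠ 0)
    (A B C A' B' C' D E F : Fin 3 → ℝ)
    (hABC : ¬Coll A B C)
    (hAc : dot3 A (M.mulVec A) ≠ 0) (hBc : dot3 B (M.mulVec B) ≠ 0)
    (hCc : dot3 C (M.mulVec C) ≠ 0)
    (hA' : A' ≠ 0) (hA'B : dot3 B (M.mulVec A') = 0) (hA'C : dot3 C (M.mulVec A') = 0)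
    (hB' : B' ≠ 0) (hB'C : dot3 C (M.mulVec B') = 0) (hB'A : dot3 A (M.mulVec B') = 0)
    (hC' : C' ≠ 0) (hC'A : dot3 A (M.mulVec C') = 0) (hC'B : dot3 B (M.mulVec C') = 0)
    (hA'c : dot3 A' (M.mulVec A') ≠ 0) (hB'c : dot3 B' (M.mulVec B') ≠ 0)
    (hC'c : dot3 C' (M.mulVec C') ≠ 0)
    (htana : ¬Coll B C A') (htanb : ¬Coll C A B') (htanc : ¬Coll A B C')
    (hD : ∃ Da, Midpoints M B C D Da) (hE : ∃ Eb, Midpoints M C A E Eb)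
    (hF : ∃ Fc, Midpoints M A B F Fc)
    (hDEF : ¬Coll D E F) :
    ∃ S : Fin 3 → ℝ, S ≠ 0 ∧ Coll A' D S ∧ Coll B' E S ∧ Coll C' F S := by
  obtain ⟨Da, hDa⟩ := hD
  obtain ⟨Eb, hEb⟩ := hE
  obtain ⟨Fc, hFc⟩ := hF
  have hconjD := hDa.2.2.1
  have hconjE := hEb.2.2.1
  have hconjF := hFc.2.2.1
  obtain ⟨x1, y1, z1, w1, hD4, hD5, hx1, hy1, hz1, hw1, hyz1, hq1⟩ :=
    midpoint_coords M hsymm B C D Da hDa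
  obtain ⟨x2, y2, z2, w2, hE4, hE5, hx2, hy2, hz2, hw2, hyz2, hq2⟩ :=
    midpoint_coords M hsymm C A E Eb hEb
  obtain ⟨x3, y3, z3, w3, hF4, hF5, hx3, hy3, hz3, hw3, hyz3, hq3⟩ :=
    midpoint_coords M hsymm A B F Fc hFc
  set p := dot3 A (M.mulVec A) with hp
  set q := dot3 B (M.mulVec B) with hq
  set r := dot3 C (M.mulVec C) with hr
  -- the coordinate matrix of the triangle
  set N : Matrix (Fin 3) (Fin 3) ℝ := Matrix.of ![A, B, C] with hNdef
  have hNdet : N.det ≠ 0 := by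
    intro h
    obtain ⟨l, hl, hl0⟩ := (Matrix.exists_mulVec_eq_zero_iff).mpr h
    rw [hNdef, rowsMul] at hl0
    exact hABC ⟨l, hl,
      by rw [dot3_comm]; have := congrFun hl0 0; simpa using this,
      by rw [dot3_comm]; have := congrFun hl0 1; simpa using this,
      by rw [dot3_comm]; have := congrFun hl0 2; simpa using this⟩
  -- products of the first coordinates agree
  have hsq : (x1*x2*x3)^2 * (q*r*p) = (y1*y2*y3)^2 * (q*r*p) := by
    linear_combination (x2^2*r)*(x3^2*p)*hq1 + (y1^2*r)*(x3^2*p)*hq2 + (y1^2*r)*(y2^2*p)*hq3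
  have hqrp : q*r*p ≠ 0 := mul_ne_zero (mul_ne_zero hBc hCc) hAc
  have hsq' : (x1*x2*x3)^2 = (y1*y2*y3)^2 := mul_right_cancel₀ hqrp hsq
  have hsum : x1*x2*x3 + y1*y2*y3 ≠ 0 := by
    intro hs
    apply hDEF
    set m : Fin 3 → ℝ := ![-(x2*y3), x2*x3, y2*y3] with hm
    have hm0 : m ≠ 0 := by
      intro h0
      have := congrFun h0 1
      rw [hm] at this
      simp only [Matrix.cons_val_one, Matrix.head_cons, Pi.zero_apply] at this
      exact (mul_ne_zero hx2 hx3) this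
    set l : Fin 3 → ℝ := N⁻¹.mulVec m with hl
    have hcomp : ![dot3 A l, dot3 B l, dot3 C l] = m := by
      rw [← rowsMul, ← hNdef]; exact mulVec_inv_cancel N hNdet m
    have hlA : dot3 A l = -(x2*y3) := by have := congrFun hcomp 0; simpa [hm] using this
    have hlB : dot3 B l = x2*x3 := by have := congrFun hcomp 1; simpa [hm] using this
    have hlC : dot3 C l = y2*y3 := by have := congrFun hcomp 2; simpa [hm] using this
    refine ⟨l, ?_, ?_, ?_, ?_⟩
    · intro h0
      apply hm0
      rw [← mulVec_inv_cancel N hNdet m, ← hl, h0, Matrix.mulVec_zero]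
    · rw [dot3_comm, hD4, dot3_left, hlB, hlC]; linarith
    · rw [dot3_comm, hE4, dot3_left, hlC, hlA]; ring
    · rw [dot3_comm, hF4, dot3_left, hlA, hlB]; ring
  have hprod : x1*x2*x3 = y1*y2*y3 := by
    have h2 : (x1*x2*x3 - y1*y2*y3) * (x1*x2*x3 + y1*y2*y3) = 0 := by linear_combination hsq'
    rcases mul_eq_zero.mp h2 with h0 | h0
    · linarith
    · exact absurd h0 hsum
  -- key identity for the conjugate midpoints
  have hzw : z1*z2*z3 + w1*w2*w3 = 0 := by
    have hy123 : y1*y2*y3 ≠ 0 := mul_ne_zero (mul_ne_zero hy1 hy2) hy3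
    have h0 : (y1*y2*y3) * (z1*z2*z3 + w1*w2*w3) = 0 := by
      linear_combination (y2*z2*y3*z3)*hyz1 + (-(x1*w1)*y3*z3)*hyz2 + (x1*x2*w1*w2)*hyz3 +
        (-(w1*w2*w3))*hprod
    rcases mul_eq_zero.mp h0 with h0 | h0
    · exact absurd h0 hy123
    · exact h0
  -- construct the concurrency point S
  set t : Fin 3 → ℝ := ![-(z2*w3), z2*z3, w2*w3] with ht
  set S : Fin 3 → ℝ := M⁻¹.mulVec (N⁻¹.mulVec t) with hS
  have hMS : M.mulVec S = N⁻¹.mulVec t := by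
    rw [hS]; exact mulVec_inv_cancel M hdet _
  have hcompS : ![dot3 A (M.mulVec S), dot3 B (M.mulVec S), dot3 C (M.mulVec S)] = t := by
    rw [← rowsMul, ← hNdef, hMS]; exact mulVec_inv_cancel N hNdet t
  have htA : dot3 A (M.mulVec S) = -(z2*w3) := by have := congrFun hcompS 0; simpa [ht] using this
  have htB : dot3 B (M.mulVec S) = z2*z3 := by have := congrFun hcompS 1; simpa [ht] using this
  have htC : dot3 C (M.mulVec S) = w2*w3 := by have := congrFun hcompS 2; simpa [ht] using this
  have hS0 : S ≠ 0 := by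
    intro h0
    rw [h0, Matrix.mulVec_zero] at htB
    have : (0:ℝ) = z2*z3 := by simpa [dot3] using htB
    exact (mul_ne_zero hz2 hz3) this.symm
  -- nonvanishing of the conjugate midpoints, hence of the bisector line forms
  have key : ∀ (X Y P : Fin 3 → ℝ) (z w : ℝ), z ≠ 0 → P = z • X + w • Y →
      (∀ c : Fin 3 → ℝ, c ≠ 0 → Matrix.vecMul c N ≠ 0) →
      ((X = B ∧ Y = C) ∨ (X = C ∧ Y = A) ∨ (X = A ∧ Y = B)) → M.mulVec P ≠ 0 := by
    intro X Y P z w hz hP hker hcase h0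
    have hP0 : P = 0 := by
      rw [← inv_mulVec_cancel M hdet P, h0, Matrix.mulVec_zero]
    rcases hcase with ⟨hX, hY⟩ | ⟨hX, hY⟩ | ⟨hX, hY⟩
    · apply hker ![0, z, w]
      · intro hc; have := congrFun hc 1; simp at this; exact hz this
      · rw [hNdef, vecMulRows]
        simp only [Matrix.cons_val_zero, Matrix.cons_val_one, Matrix.head_cons,
          Matrix.cons_val_two, Matrix.tail_cons]
        rw [← hX, ← hY]
        funext j
        have := congrFun hP0 j
        rw [hP] at this
        simp at this ⊢
        linarith
    · apply hker ![w, 0, z]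
      · intro hc; have := congrFun hc 2; simp at this; exact hz this
      · rw [hNdef, vecMulRows]
        simp only [Matrix.cons_val_zero, Matrix.cons_val_one, Matrix.head_cons,
          Matrix.cons_val_two, Matrix.tail_cons]
        rw [← hY, ← hX]
        funext j
        have := congrFun hP0 j
        rw [hP] at this
        simp at this ⊢
        linarith
    · apply hker ![z, w, 0]
      · intro hc; have := congrFun hc 0; simp at this; exact hz this
      · rw [hNdef, vecMulRows]
        simp only [Matrix.cons_val_zero, Matrix.cons_val_one, Matrix.head_cons,
          Matrix.cons_val_two, Matrix.tail_cons]
        rw [← hX, ← hY]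
        funext j
        have := congrFun hP0 j
        rw [hP] at this
        simp at this ⊢
        linarith
  have hker : ∀ c : Fin 3 → ℝ, c ≠ 0 → Matrix.vecMul c N ≠ 0 := by
    intro c hc h0
    apply hNdet
    rw [← Matrix.exists_vecMul_eq_zero_iff]
    exact ⟨c, hc, h0⟩
  have hDa0 : M.mulVec Da ≠ 0 :=
    key B C Da z1 w1 hz1 hD5 hker (Or.inl ⟨rfl, rfl⟩)
  have hEb0 : M.mulVec Eb ≠ 0 :=
    key C A Eb z2 w2 hz2 hE5 hker (Or.inr (Or.inl ⟨rfl, rfl⟩))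
  have hFc0 : M.mulVec Fc ≠ 0 :=
    key A B Fc z3 w3 hz3 hF5 hker (Or.inr (Or.inr ⟨rfl, rfl⟩))
  refine ⟨S, hS0, ?_, ?_, ?_⟩
  · refine ⟨M.mulVec Da, hDa0, ?_, ?_, ?_⟩
    · rw [dot3_comm, dot3_symmM M hsymm A' Da, hD5, dot3_left, hA'B, hA'C]; ring
    · rw [dot3_comm]; exact hconjD
    · rw [dot3_comm, dot3_symmM M hsymm S Da, hD5, dot3_left, htB, htC]
      linarith
  · refine ⟨M.mulVec Eb, hEb0, ?_, ?_, ?_⟩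
    · rw [dot3_comm, dot3_symmM M hsymm B' Eb, hE5, dot3_left, hB'C, hB'A]; ring
    · rw [dot3_comm]; exact hconjE
    · rw [dot3_comm, dot3_symmM M hsymm S Eb, hE5, dot3_left, htC, htA]; ring
  · refine ⟨M.mulVec Fc, hFc0, ?_, ?_, ?_⟩
    · rw [dot3_comm, dot3_symmM M hsymm C' Fc, hF5, dot3_left, hC'A, hC'B]; ring
    · rw [dot3_comm]; exact hconjF
    · rw [dot3_comm, dot3_symmM M hsymm S Fc, hF5, dot3_left, htA, htB]; ring
end

section
/- Menelaus' projective formula: let x, y, z, r, s be five lines in general position (no three concurrent, all distinct) in the projective plane. With X = y∩z, Y = z∩x, Z = x∩y, X₀ = x∩r, Y₀ = y∩r, Z₀ = z∩r, X₁ = x∩s, Y₁ = y∩s, Z₁ = z∩s, we have (XY Z₁ Z₀)·(YZ X₁ X₀)·(ZX Y₁ Y₀) = 1. -/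
open Matrix

/-- Three lines (given by their coefficient vectors) are concurrent: they pass through a
common projective point. -/
def Conc (l m n : Fin 3 → ℝ) : Prop :=
  ∃ P : Fin 3 → ℝ, P ≠ 0 ∧ dot3 l P = 0 ∧ dot3 m P = 0 ∧ dot3 n P = 0

/-!
Since `x, y, z` are not concurrent, a point on one side of the triangle is written in the two
vertices of that side with coefficients read off by pairing with the other two sides:
a point `P` on `z` is `(x·P / x·X) X + (y·P / y·Y) Y`. Hence `(X Y Z₁ Z₀)` is the product of
dot-ratios `(y·Z₁)(x·Z₀) / ((x·Z₁)(y·Z₀))`, the vertex normalisations cancelling. The same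
decomposition along a transversal `s` (in the points `x∩s`, `y∩s`) gives the Menelaus identity
`(x·Z₁)(y·X₁)(z·Y₁) = -(y·Z₁)(z·X₁)(x·Y₁)`, and likewise for `r`; the two signs cancel in the
product of the three cross ratios.
-/

lemma dot3_smul_add_smul (l X Y : Fin 3 → ℝ) (a b : ℝ) :
    dot3 l (a • X + b • Y) = a * dot3 l X + b * dot3 l Y := by
  simp only [dot3, Pi.add_apply, Pi.smul_apply, smul_eq_mul]
  ring

lemma dot3_sub (l u v : Fin 3 → ℝ) : dot3 l (u - v) = dot3 l u - dot3 l v := by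
  simp only [dot3, Pi.sub_apply]
  ring

lemma Conc.rotate {a b c : Fin 3 → ℝ} (h : Conc a b c) : Conc b c a :=
  let ⟨P, hP, ha, hb, hc⟩ := h
  ⟨P, hP, hb, hc, ha⟩

section Decomposition

variable {l m n X Y P : Fin 3 → ℝ}

lemma eq_smul_add_smul_of_not_conc (h : ¬Conc l m n)
    (hXm : dot3 m X = 0) (hXn : dot3 n X = 0) (hYn : dot3 n Y = 0) (hYl : dot3 l Y = 0)
    (hlX : dot3 l X ≠ 0) (hmY : dot3 m Y ≠ 0) (hPn : dot3 n P = 0) :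
    P = (dot3 l P / dot3 l X) • X + (dot3 m P / dot3 m Y) • Y := by
  by_contra hne
  refine h ⟨(dot3 l P / dot3 l X) • X + (dot3 m P / dot3 m Y) • Y - P,
    sub_ne_zero.2 (Ne.symm hne), ?_, ?_, ?_⟩ <;>
  rw [dot3_sub, dot3_smul_add_smul, sub_eq_zero] <;>
  simp only [hXm, hXn, hYn, hYl, hPn, mul_zero, zero_add, add_zero] <;>
  field_simp

lemma crv_of_not_conc {Q : Fin 3 → ℝ} (h : ¬Conc l m n)
    (hX : X ≠ 0) (hXm : dot3 m X = 0) (hXn : dot3 n X = 0)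
    (hY : Y ≠ 0) (hYn : dot3 n Y = 0) (hYl : dot3 l Y = 0)
    (hPn : dot3 n P = 0) (hlP : dot3 l P ≠ 0) (hQn : dot3 n Q = 0) (hmQ : dot3 m Q ≠ 0) :
    CRv X Y P Q (dot3 m P * dot3 l Q / (dot3 l P * dot3 m Q)) := by
  have hlX : dot3 l X ≠ 0 := fun hlX => h ⟨X, hX, hlX, hXm, hXn⟩
  have hmY : dot3 m Y ≠ 0 := fun hmY => h ⟨Y, hY, hYl, hmY, hYn⟩
  refine ⟨_, _, _, _, eq_smul_add_smul_of_not_conc h hXm hXn hYn hYl hlX hmY hPn,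
    eq_smul_add_smul_of_not_conc h hXm hXn hYn hYl hlX hmY hQn, by positivity, ?_⟩
  field_simp

end Decomposition

lemma dot3_menelaus_transversal {l m n t A B C : Fin 3 → ℝ} (h : ¬Conc l m t)
    (hA : A ≠ 0) (hAl : dot3 l A = 0) (hAt : dot3 t A = 0)
    (hB : B ≠ 0) (hBm : dot3 m B = 0) (hBt : dot3 t B = 0)
    (hCn : dot3 n C = 0) (hCt : dot3 t C = 0) :
    dot3 l C * dot3 m A * dot3 n B + dot3 m C * dot3 n A * dot3 l B = 0 := by
  have hlB : dot3 l B ≠ 0 := fun hlB => h ⟨B, hB, hlB, hBm, hBt⟩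
  have hmA : dot3 m A ≠ 0 := fun hmA => h ⟨A, hA, hAl, hmA, hAt⟩
  have hC := congrArg (dot3 n) (eq_smul_add_smul_of_not_conc h hBm hBt hAt hAl hlB hmA hCt)
  rw [hCn, dot3_smul_add_smul] at hC
  field_simp at hC
  linear_combination -hC

theorem menelaus_projective_general (x y z r s : Fin 3 → ℝ)
    (hxyz : ¬Conc x y z) (hxyr : ¬Conc x y r) (hxys : ¬Conc x y s)
    (hxzr : ¬Conc x z r) (hxzs : ¬Conc x z s)
    (hyzr : ¬Conc y z r) (hyzs : ¬Conc y z s)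
    (X Y Z X0 Y0 Z0 X1 Y1 Z1 : Fin 3 → ℝ)
    (hX : X ≠ 0) (hXy : dot3 y X = 0) (hXz : dot3 z X = 0)
    (hY : Y ≠ 0) (hYz : dot3 z Y = 0) (hYx : dot3 x Y = 0)
    (hZ : Z ≠ 0) (hZx : dot3 x Z = 0) (hZy : dot3 y Z = 0)
    (hX0 : X0 ≠ 0) (hX0x : dot3 x X0 = 0) (hX0r : dot3 r X0 = 0)
    (hY0 : Y0 ≠ 0) (hY0y : dot3 y Y0 = 0) (hY0r : dot3 r Y0 = 0)
    (hZ0 : Z0 ≠ 0) (hZ0z : dot3 z Z0 = 0) (hZ0r : dot3 r Z0 = 0)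
    (hX1 : X1 ≠ 0) (hX1x : dot3 x X1 = 0) (hX1s : dot3 s X1 = 0)
    (hY1 : Y1 ≠ 0) (hY1y : dot3 y Y1 = 0) (hY1s : dot3 s Y1 = 0)
    (hZ1 : Z1 ≠ 0) (hZ1z : dot3 z Z1 = 0) (hZ1s : dot3 s Z1 = 0) :
    ∃ k1 k2 k3 : ℝ, CRv X Y Z1 Z0 k1 ∧ CRv Y Z X1 X0 k2 ∧ CRv Z X Y1 Y0 k3 ∧
      k1 * k2 * k3 = 1 := by
  have hxZ1 : dot3 x Z1 ≠ 0 := fun h => hxzs ⟨Z1, hZ1, h, hZ1z, hZ1s⟩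
  have hyZ0 : dot3 y Z0 ≠ 0 := fun h => hyzr ⟨Z0, hZ0, h, hZ0z, hZ0r⟩
  have hyX1 : dot3 y X1 ≠ 0 := fun h => hxys ⟨X1, hX1, hX1x, h, hX1s⟩
  have hzX0 : dot3 z X0 ≠ 0 := fun h => hxzr ⟨X0, hX0, hX0x, h, hX0r⟩
  have hzY1 : dot3 z Y1 ≠ 0 := fun h => hyzs ⟨Y1, hY1, hY1y, h, hY1s⟩
  have hxY0 : dot3 x Y0 ≠ 0 := fun h => hxyr ⟨Y0, hY0, h, hY0y, hY0r⟩
  have hs := dot3_menelaus_transversal hxys hX1 hX1x hX1s hY1 hY1y hY1s hZ1z hZ1s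
  have hr := dot3_menelaus_transversal hxyr hX0 hX0x hX0r hY0 hY0y hY0r hZ0z hZ0r
  refine ⟨_, _, _,
    crv_of_not_conc hxyz hX hXy hXz hY hYz hYx hZ1z hxZ1 hZ0z hyZ0,
    crv_of_not_conc (hxyz ∘ Conc.rotate ∘ Conc.rotate) hY hYz hYx hZ hZx hZy hX1x hyX1 hX0x hzX0,
    crv_of_not_conc (hxyz ∘ Conc.rotate) hZ hZx hZy hX hXy hXz hY1y hzY1 hY0y hxY0, ?_⟩
  field_simp
  linear_combination (dot3 x Z0 * dot3 y X0 * dot3 z Y0) * hs -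
    (dot3 x Z1 * dot3 y X1 * dot3 z Y1) * hr

/-- Menelaus' projective formula: for five lines `x, y, z, r, s` in general position
(no three concurrent), with `X = y∩z`, `Y = z∩x`, `Z = x∩y`, `X₀ = x∩r`, `Y₀ = y∩r`,
`Z₀ = z∩r`, `X₁ = x∩s`, `Y₁ = y∩s`, `Z₁ = z∩s`, one has
`(XY Z₁ Z₀)·(YZ X₁ X₀)·(ZX Y₁ Y₀) = 1`. -/
theorem menelaus_projective (x y z r s : Fin 3 → ℝ)
    (hxyz : ¬Conc x y z) (hxyr : ¬Conc x y r) (hxys : ¬Conc x y s)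
    (hxzr : ¬Conc x z r) (hxzs : ¬Conc x z s) (hxrs : ¬Conc x r s)
    (hyzr : ¬Conc y z r) (hyzs : ¬Conc y z s) (hyrs : ¬Conc y r s)
    (hzrs : ¬Conc z r s)
    (X Y Z X0 Y0 Z0 X1 Y1 Z1 : Fin 3 → ℝ)
    (hX : X ≠ 0) (hXy : dot3 y X = 0) (hXz : dot3 z X = 0)
    (hY : Y ≠ 0) (hYz : dot3 z Y = 0) (hYx : dot3 x Y = 0)
    (hZ : Z ≠ 0) (hZx : dot3 x Z = 0) (hZy : dot3 y Z = 0)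
    (hX0 : X0 ≠ 0) (hX0x : dot3 x X0 = 0) (hX0r : dot3 r X0 = 0)
    (hY0 : Y0 ≠ 0) (hY0y : dot3 y Y0 = 0) (hY0r : dot3 r Y0 = 0)
    (hZ0 : Z0 ≠ 0) (hZ0z : dot3 z Z0 = 0) (hZ0r : dot3 r Z0 = 0)
    (hX1 : X1 ≠ 0) (hX1x : dot3 x X1 = 0) (hX1s : dot3 s X1 = 0)
    (hY1 : Y1 ≠ 0) (hY1y : dot3 y Y1 = 0) (hY1s : dot3 s Y1 = 0)
    (hZ1 : Z1 ≠ 0) (hZ1z : dot3 z Z1 = 0) (hZ1s : dot3 s Z1 = 0) :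
    ∃ k1 k2 k3 : ℝ, CRv X Y Z1 Z0 k1 ∧ CRv Y Z X1 X0 k2 ∧ CRv Z X Y1 Y0 k3 ∧
      k1 * k2 * k3 = 1 :=
  menelaus_projective_general x y z r s hxyz hxyr hxys hxzr hxzs hyzr hyzs X Y Z X0 Y0 Z0 X1 Y1 Z1
    hX hXy hXz hY hYz hYx hZ hZx hZy hX0 hX0x hX0r hY0 hY0y hY0r hZ0 hZ0z hZ0r hX1 hX1x hX1s hY1
    hY1y hY1s hZ1 hZ1z hZ1s
end

section
/- Projective Ceva: let XYZ be a projective triangle, X₁ ∈ YZ, Y₁ ∈ ZX, Z₁ ∈ XY, and let r be a line through none of X, Y, Z with X₀ = r∩YZ, Y₀ = r∩ZX, Z₀ = r∩XY. The lines XX₁, YY₁, ZZ₁ are concurrent if and only if (XY Z₁ Z₀)·(YZ X₁ X₀)·(ZX Y₁ Y₀) = -1. -/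
open Matrix

lemma dot3_smul2 (l u v : Fin 3 → ℝ) (a b : ℝ) :
    dot3 l (a • u + b • v) = a * dot3 l u + b * dot3 l v := by
  simp [dot3]; ring

lemma dot3_smul3 (l u v w : Fin 3 → ℝ) (a b c : ℝ) :
    dot3 l (a • u + b • v + c • w) = a * dot3 l u + b * dot3 l v + c * dot3 l w := by
  simp [dot3]; ring

/-- Projective Ceva theorem: let `XYZ` be a projective triangle, `X₁ ∈ YZ`, `Y₁ ∈ ZX`,
`Z₁ ∈ XY` points distinct from the vertices, and `r` a line through none of the vertices,
with `X₀ = r∩YZ`, `Y₀ = r∩ZX`, `Z₀ = r∩XY`.  The cevians `XX₁`, `YY₁`, `ZZ₁` are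
concurrent if and only if `(XY Z₁ Z₀)·(YZ X₁ X₀)·(ZX Y₁ Y₀) = -1`. -/
theorem ceva_projective (X Y Z X1 Y1 Z1 r X0 Y0 Z0 : Fin 3 → ℝ)
    (hXYZ : ¬Coll X Y Z)
    (hX1 : X1 ≠ 0) (hX1l : Coll Y Z X1)
    (hX1Y : ∀ t : ℝ, X1 ≠ t • Y) (hX1Z : ∀ t : ℝ, X1 ≠ t • Z)
    (hY1 : Y1 ≠ 0) (hY1l : Coll Z X Y1)
    (hY1Z : ∀ t : ℝ, Y1 ≠ t • Z) (hY1X : ∀ t : ℝ, Y1 ≠ t • X)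
    (hZ1 : Z1 ≠ 0) (hZ1l : Coll X Y Z1)
    (hZ1X : ∀ t : ℝ, Z1 ≠ t • X) (hZ1Y : ∀ t : ℝ, Z1 ≠ t • Y)
    (hrX : dot3 r X ≠ 0) (hrY : dot3 r Y ≠ 0) (hrZ : dot3 r Z ≠ 0)
    (hX0 : X0 ≠ 0) (hX0l : Coll Y Z X0) (hX0r : dot3 r X0 = 0)
    (hY0 : Y0 ≠ 0) (hY0l : Coll Z X Y0) (hY0r : dot3 r Y0 = 0)
    (hZ0 : Z0 ≠ 0) (hZ0l : Coll X Y Z0) (hZ0r : dot3 r Z0 = 0) :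
    (∃ Q : Fin 3 → ℝ, Q ≠ 0 ∧ Coll X X1 Q ∧ Coll Y Y1 Q ∧ Coll Z Z1 Q) ↔
      (∃ k1 k2 k3 : ℝ, CRv X Y Z1 Z0 k1 ∧ CRv Y Z X1 X0 k2 ∧ CRv Z X Y1 Y0 k3 ∧
        k1 * k2 * k3 = -1) := by
  classical
  set D : Matrix (Fin 3) (Fin 3) ℝ := Matrix.of ![X, Y, Z] with hDdef
  have hmv : ∀ l : Fin 3 → ℝ, D *ᵥ l = ![dot3 l X, dot3 l Y, dot3 l Z] := by
    intro l
    funext i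
    fin_cases i <;>
      simp [hDdef, Matrix.mulVec, dotProduct, Fin.sum_univ_three, dot3] <;> ring
  have hvm : ∀ v : Fin 3 → ℝ, v ᵥ* D = v 0 • X + v 1 • Y + v 2 • Z := by
    intro v
    funext j
    simp [hDdef, Matrix.vecMul, dotProduct, Fin.sum_univ_three]
  have hdet : D.det ≠ 0 := by
    intro h
    obtain ⟨v, hv, hv0⟩ := (Matrix.exists_mulVec_eq_zero_iff).2 h
    rw [hmv] at hv0
    exact hXYZ ⟨v, hv, by simpa using congr_fun hv0 0, by simpa using congr_fun hv0 1,
      by simpa using congr_fun hv0 2⟩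
  have hunit : IsUnit D.det := isUnit_iff_ne_zero.2 hdet
  have hindep : ∀ a b c : ℝ, a • X + b • Y + c • Z = 0 → a = 0 ∧ b = 0 ∧ c = 0 := by
    intro a b c h
    have h1 : (![a,b,c] : Fin 3 → ℝ) ᵥ* D = 0 := by
      rw [hvm]; simpa using h
    have h2 : (![a,b,c] : Fin 3 → ℝ) = 0 := by
      have h3 := congrArg (· ᵥ* D⁻¹) h1
      simpa [Matrix.vecMul_vecMul, Matrix.mul_nonsing_inv D hunit] using h3
    exact ⟨by simpa using congr_fun h2 0, by simpa using congr_fun h2 1,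
      by simpa using congr_fun h2 2⟩
  have hdecomp : ∀ v : Fin 3 → ℝ, ∃ a b c : ℝ, v = a • X + b • Y + c • Z := by
    intro v
    refine ⟨(v ᵥ* D⁻¹) 0, (v ᵥ* D⁻¹) 1, (v ᵥ* D⁻¹) 2, ?_⟩
    rw [← hvm]
    rw [Matrix.vecMul_vecMul, Matrix.nonsing_inv_mul D hunit, Matrix.vecMul_one]
  have hline : ∀ w : Fin 3 → ℝ, w ≠ 0 →
      ∃ l : Fin 3 → ℝ, l ≠ 0 ∧ dot3 l X = w 0 ∧ dot3 l Y = w 1 ∧ dot3 l Z = w 2 := by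
    intro w hw
    have hDl : D *ᵥ (D⁻¹ *ᵥ w) = w := by
      rw [Matrix.mulVec_mulVec, Matrix.mul_nonsing_inv D hunit, Matrix.one_mulVec]
    rw [hmv] at hDl
    refine ⟨D⁻¹ *ᵥ w, ?_, by simpa using congr_fun hDl 0, by simpa using congr_fun hDl 1,
      by simpa using congr_fun hDl 2⟩
    intro h0
    apply hw
    rw [← hDl, h0]
    simp [dot3]
  -- coefficient of missing vertex is zero
  have hzeroX : ∀ (P : Fin 3 → ℝ) (a b c : ℝ), P = a • X + b • Y + c • Z →
      Coll Y Z P → a = 0 := by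
    intro P a b c hP ⟨l, hl, hlY, hlZ, hlP⟩
    have hlX : dot3 l X ≠ 0 := fun h => hXYZ ⟨l, hl, h, hlY, hlZ⟩
    rw [hP, dot3_smul3, hlY, hlZ] at hlP
    have : a * dot3 l X = 0 := by linarith
    exact (mul_eq_zero.1 this).resolve_right hlX
  have hzeroY : ∀ (P : Fin 3 → ℝ) (a b c : ℝ), P = a • X + b • Y + c • Z →
      Coll Z X P → b = 0 := by
    intro P a b c hP ⟨l, hl, hlZ, hlX, hlP⟩
    have hlY : dot3 l Y ≠ 0 := fun h => hXYZ ⟨l, hl, hlX, h, hlZ⟩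
    rw [hP, dot3_smul3, hlX, hlZ] at hlP
    have : b * dot3 l Y = 0 := by linarith
    exact (mul_eq_zero.1 this).resolve_right hlY
  have hzeroZ : ∀ (P : Fin 3 → ℝ) (a b c : ℝ), P = a • X + b • Y + c • Z →
      Coll X Y P → c = 0 := by
    intro P a b c hP ⟨l, hl, hlX, hlY, hlP⟩
    have hlZ : dot3 l Z ≠ 0 := fun h => hXYZ ⟨l, hl, hlX, hlY, h⟩
    rw [hP, dot3_smul3, hlX, hlY] at hlP
    have : c * dot3 l Z = 0 := by linarith
    exact (mul_eq_zero.1 this).resolve_right hlZ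
  -- decompositions of the six points
  obtain ⟨a0, b, c, hX1d⟩ := hdecomp X1
  have := hzeroX X1 a0 b c hX1d hX1l
  rw [this, zero_smul, zero_add] at hX1d
  have hb : b ≠ 0 := by
    intro h; rw [h, zero_smul, zero_add] at hX1d; exact hX1Z c hX1d
  have hc : c ≠ 0 := by
    intro h; rw [h, zero_smul, add_zero] at hX1d; exact hX1Y b hX1d
  obtain ⟨a2, b2, c2, hY1d⟩ := hdecomp Y1
  have := hzeroY Y1 a2 b2 c2 hY1d hY1l
  rw [this, zero_smul, add_zero] at hY1d
  have ha2 : a2 ≠ 0 := by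
    intro h; rw [h, zero_smul, zero_add] at hY1d; exact hY1Z c2 hY1d
  have hc2 : c2 ≠ 0 := by
    intro h; rw [h, zero_smul, add_zero] at hY1d; exact hY1X a2 hY1d
  obtain ⟨a1, b1, c3, hZ1d⟩ := hdecomp Z1
  have := hzeroZ Z1 a1 b1 c3 hZ1d hZ1l
  rw [this, zero_smul, add_zero] at hZ1d
  have ha1 : a1 ≠ 0 := by
    intro h; rw [h, zero_smul, zero_add] at hZ1d; exact hZ1Y b1 hZ1d
  have hb1 : b1 ≠ 0 := by
    intro h; rw [h, zero_smul, add_zero] at hZ1d; exact hZ1X a1 hZ1d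
  -- X0 = u•Y + v•Z
  obtain ⟨u0, u, v, hX0d⟩ := hdecomp X0
  have := hzeroX X0 u0 u v hX0d hX0l
  rw [this, zero_smul, zero_add] at hX0d
  have hX0rel : u * dot3 r Y + v * dot3 r Z = 0 := by
    rw [hX0d, dot3_smul2] at hX0r; exact hX0r
  have hv : v ≠ 0 := by
    intro h
    rw [h, zero_smul, add_zero] at hX0d
    rw [h] at hX0rel
    have hu : u = 0 := by
      have : u * dot3 r Y = 0 := by linarith
      exact (mul_eq_zero.1 this).resolve_right hrY
    rw [hu, zero_smul] at hX0d; exact hX0 hX0d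
  have hu : u ≠ 0 := by
    intro h
    rw [h, zero_smul, zero_add] at hX0d
    rw [h] at hX0rel
    have hv' : v = 0 := by
      have : v * dot3 r Z = 0 := by linarith
      exact (mul_eq_zero.1 this).resolve_right hrZ
    rw [hv', zero_smul] at hX0d; exact hX0 hX0d
  -- Y0 = m•X + n•Z
  obtain ⟨m, m0, n, hY0d⟩ := hdecomp Y0
  have := hzeroY Y0 m m0 n hY0d hY0l
  rw [this, zero_smul, add_zero] at hY0d
  have hY0rel : m * dot3 r X + n * dot3 r Z = 0 := by
    rw [hY0d, dot3_smul2] at hY0r; exact hY0r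
  have hn : n ≠ 0 := by
    intro h
    rw [h, zero_smul, add_zero] at hY0d
    rw [h] at hY0rel
    have hm : m = 0 := by
      have : m * dot3 r X = 0 := by linarith
      exact (mul_eq_zero.1 this).resolve_right hrX
    rw [hm, zero_smul] at hY0d; exact hY0 hY0d
  have hm : m ≠ 0 := by
    intro h
    rw [h, zero_smul, zero_add] at hY0d
    rw [h] at hY0rel
    have hn' : n = 0 := by
      have : n * dot3 r Z = 0 := by linarith
      exact (mul_eq_zero.1 this).resolve_right hrZ
    rw [hn', zero_smul] at hY0d; exact hY0 hY0d
  -- Z0 = e•X + f•Y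
  obtain ⟨e, f, f0, hZ0d⟩ := hdecomp Z0
  have := hzeroZ Z0 e f f0 hZ0d hZ0l
  rw [this, zero_smul, add_zero] at hZ0d
  have hZ0rel : e * dot3 r X + f * dot3 r Y = 0 := by
    rw [hZ0d, dot3_smul2] at hZ0r; exact hZ0r
  have hf : f ≠ 0 := by
    intro h
    rw [h, zero_smul, add_zero] at hZ0d
    rw [h] at hZ0rel
    have he : e = 0 := by
      have : e * dot3 r X = 0 := by linarith
      exact (mul_eq_zero.1 this).resolve_right hrX
    rw [he, zero_smul] at hZ0d; exact hZ0 hZ0d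
  have he : e ≠ 0 := by
    intro h
    rw [h, zero_smul, zero_add] at hZ0d
    rw [h] at hZ0rel
    have hf' : f = 0 := by
      have : f * dot3 r Y = 0 := by linarith
      exact (mul_eq_zero.1 this).resolve_right hrY
    rw [hf', zero_smul] at hZ0d; exact hZ0 hZ0d
  -- the r-relation on the 0-points
  have h9 : u * e * n = -(v * f * m) := by
    have hu' : u * dot3 r Y = -(v * dot3 r Z) := by linarith
    have he' : e * dot3 r X = -(f * dot3 r Y) := by linarith
    have hn' : n * dot3 r Z = -(m * dot3 r X) := by linarith
    have hprod : (u * dot3 r Y) * ((e * dot3 r X) * (n * dot3 r Z)) =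
        (-(v * dot3 r Z)) * ((-(f * dot3 r Y)) * (-(m * dot3 r X))) := by
      rw [hu', he', hn']
    have hR : dot3 r X * dot3 r Y * dot3 r Z ≠ 0 :=
      mul_ne_zero (mul_ne_zero hrX hrY) hrZ
    apply mul_left_cancel₀ hR
    linear_combination hprod
  constructor
  · -- concurrency → cross ratio condition
    rintro ⟨Q, hQ0, hcX, hcY, hcZ⟩
    obtain ⟨α, β, γ, hQd⟩ := hdecomp Q
    -- Coll X X1 Q gives b*γ = c*β
    have key1 : b * γ = c * β := by
      obtain ⟨l, hl, hlX, hlX1, hlQ⟩ := hcX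
      rw [hX1d, dot3_smul2] at hlX1
      rw [hQd, dot3_smul3, hlX, mul_zero, zero_add] at hlQ
      have hne : ¬(dot3 l Y = 0 ∧ dot3 l Z = 0) := by
        rintro ⟨h1, h2⟩; exact hXYZ ⟨l, hl, hlX, h1, h2⟩
      rcases not_and_or.1 hne with hY' | hZ'
      · have : (b * γ - c * β) * dot3 l Y = 0 := by
          linear_combination γ * hlX1 - c * hlQ
        have := (mul_eq_zero.1 this).resolve_right hY'
        linarith
      · have : (b * γ - c * β) * dot3 l Z = 0 := by
          linear_combination b * hlQ - β * hlX1
        have := (mul_eq_zero.1 this).resolve_right hZ'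
        linarith
    -- Coll Y Y1 Q gives a2*γ = c2*α
    have key2 : a2 * γ = c2 * α := by
      obtain ⟨l, hl, hlY, hlY1, hlQ⟩ := hcY
      rw [hY1d, dot3_smul2] at hlY1
      rw [hQd, dot3_smul3, hlY, mul_zero, add_zero] at hlQ
      have hne : ¬(dot3 l X = 0 ∧ dot3 l Z = 0) := by
        rintro ⟨h1, h2⟩; exact hXYZ ⟨l, hl, h1, hlY, h2⟩
      rcases not_and_or.1 hne with hX' | hZ'
      · have : (a2 * γ - c2 * α) * dot3 l X = 0 := by
          linear_combination γ * hlY1 - c2 * hlQ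
        have := (mul_eq_zero.1 this).resolve_right hX'
        linarith
      · have : (a2 * γ - c2 * α) * dot3 l Z = 0 := by
          linear_combination a2 * hlQ - α * hlY1
        have := (mul_eq_zero.1 this).resolve_right hZ'
        linarith
    -- Coll Z Z1 Q gives a1*β = b1*α
    have key3 : a1 * β = b1 * α := by
      obtain ⟨l, hl, hlZ, hlZ1, hlQ⟩ := hcZ
      rw [hZ1d, dot3_smul2] at hlZ1
      rw [hQd, dot3_smul3, hlZ, mul_zero, add_zero] at hlQ
      have hne : ¬(dot3 l X = 0 ∧ dot3 l Y = 0) := by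
        rintro ⟨h1, h2⟩; exact hXYZ ⟨l, hl, h1, h2, hlZ⟩
      rcases not_and_or.1 hne with hX' | hY'
      · have : (a1 * β - b1 * α) * dot3 l X = 0 := by
          linear_combination β * hlZ1 - b1 * hlQ
        have := (mul_eq_zero.1 this).resolve_right hX'
        linarith
      · have : (a1 * β - b1 * α) * dot3 l Y = 0 := by
          linear_combination a1 * hlQ - α * hlZ1
        have := (mul_eq_zero.1 this).resolve_right hY'
        linarith
    have hα : α ≠ 0 := by
      intro h
      have hβ : β = 0 := by
        have : a1 * β = 0 := by rw [key3, h, mul_zero]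
        exact (mul_eq_zero.1 this).resolve_left ha1
      have hγ : γ = 0 := by
        have : b * γ = 0 := by rw [key1, hβ, mul_zero]
        exact (mul_eq_zero.1 this).resolve_left hb
      apply hQ0
      rw [hQd, h, hβ, hγ]
      simp
    have key : b1 * c * a2 = a1 * b * c2 := by
      apply mul_right_cancel₀ hα
      linear_combination (-(a1 * a2)) * key1 + (a1 * b) * key2 + (-(c * a2)) * key3
    refine ⟨b1 * e / (a1 * f), c * u / (b * v), a2 * n / (c2 * m),
      ⟨a1, b1, e, f, hZ1d, hZ0d, mul_ne_zero ha1 hf, rfl⟩,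
      ⟨b, c, u, v, hX1d, hX0d, mul_ne_zero hb hv, rfl⟩,
      ⟨c2, a2, n, m, hY1d.trans (add_comm _ _), hY0d.trans (add_comm _ _),
        mul_ne_zero hc2 hm, rfl⟩, ?_⟩
    field_simp
    linear_combination (e * u * n) * key + (a1 * b * c2) * h9
  · -- cross ratio condition → concurrency
    rintro ⟨k1, k2, k3, hcr1, hcr2, hcr3, hk⟩
    -- uniqueness of pair decompositions
    have huniqXY : ∀ x y x' y' : ℝ, x • X + y • Y = x' • X + y' • Y → x = x' ∧ y = y' := by
      intro x y x' y' h
      have h0 : (x - x') • X + (y - y') • Y + (0:ℝ) • Z = 0 := by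
        have hs : (x - x') • X + (y - y') • Y + (0:ℝ) • Z
            = (x • X + y • Y) - (x' • X + y' • Y) := by module
        rw [hs, h, sub_self]
      obtain ⟨h1, h2, _⟩ := hindep _ _ _ h0
      exact ⟨sub_eq_zero.1 h1, sub_eq_zero.1 h2⟩
    have huniqYZ : ∀ x y x' y' : ℝ, x • Y + y • Z = x' • Y + y' • Z → x = x' ∧ y = y' := by
      intro x y x' y' h
      have h0 : (0:ℝ) • X + (x - x') • Y + (y - y') • Z = 0 := by
        have hs : (0:ℝ) • X + (x - x') • Y + (y - y') • Z
            = (x • Y + y • Z) - (x' • Y + y' • Z) := by module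
        rw [hs, h, sub_self]
      obtain ⟨_, h1, h2⟩ := hindep _ _ _ h0
      exact ⟨sub_eq_zero.1 h1, sub_eq_zero.1 h2⟩
    have huniqZX : ∀ x y x' y' : ℝ, x • Z + y • X = x' • Z + y' • X → x = x' ∧ y = y' := by
      intro x y x' y' h
      have h0 : (y - y') • X + (0:ℝ) • Y + (x - x') • Z = 0 := by
        have hs : (y - y') • X + (0:ℝ) • Y + (x - x') • Z
            = (x • Z + y • X) - (x' • Z + y' • X) := by module
        rw [hs, h, sub_self]
      obtain ⟨h2, _, h1⟩ := hindep _ _ _ h0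
      exact ⟨sub_eq_zero.1 h1, sub_eq_zero.1 h2⟩
    obtain ⟨x, y, z, w, h1, h2, hxw, hk1⟩ := hcr1
    obtain ⟨hxe, hye⟩ := huniqXY x y a1 b1 (h1.symm.trans hZ1d)
    obtain ⟨hze, hwe⟩ := huniqXY z w e f (h2.symm.trans hZ0d)
    rw [hxe, hye, hze, hwe] at hk1
    obtain ⟨x2, y2, z2, w2, h1', h2', hxw2, hk2⟩ := hcr2
    obtain ⟨hxe2, hye2⟩ := huniqYZ x2 y2 b c (h1'.symm.trans hX1d)
    obtain ⟨hze2, hwe2⟩ := huniqYZ z2 w2 u v (h2'.symm.trans hX0d)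
    rw [hxe2, hye2, hze2, hwe2] at hk2
    obtain ⟨x3, y3, z3, w3, h1'', h2'', hxw3, hk3⟩ := hcr3
    obtain ⟨hxe3, hye3⟩ := huniqZX x3 y3 c2 a2
      (h1''.symm.trans (hY1d.trans (add_comm _ _)))
    obtain ⟨hze3, hwe3⟩ := huniqZX z3 w3 n m
      (h2''.symm.trans (hY0d.trans (add_comm _ _)))
    rw [hxe3, hye3, hze3, hwe3] at hk3
    rw [hk1, hk2, hk3] at hk
    have key : b1 * c * a2 = a1 * b * c2 := by
      field_simp at hk
      apply mul_right_cancel₀ (mul_ne_zero (mul_ne_zero hv hf) hm)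
      linear_combination (-1 : ℝ) * hk + (b1 * c * a2) * h9
    refine ⟨(a1 * b) • X + (b1 * b) • Y + (b1 * c) • Z, ?_, ?_, ?_, ?_⟩
    · intro h0
      exact (mul_ne_zero ha1 hb) (hindep _ _ _ h0).1
    · -- Coll X X1 Q
      obtain ⟨l, hl, hlX, hlY, hlZ⟩ := hline ![0, c, -b] (by
        intro hw; apply hc; simpa using congr_fun hw 1)
      refine ⟨l, hl, by simpa using hlX, ?_, ?_⟩
      · rw [hX1d, dot3_smul2, hlY, hlZ]; simp; ring
      · rw [dot3_smul3, hlX, hlY, hlZ]; simp; ring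
    · -- Coll Y Y1 Q
      obtain ⟨l, hl, hlX, hlY, hlZ⟩ := hline ![c2, 0, -a2] (by
        intro hw; apply hc2; simpa using congr_fun hw 0)
      refine ⟨l, hl, by simpa using hlY, ?_, ?_⟩
      · rw [hY1d, dot3_smul2, hlX, hlZ]; simp; ring
      · rw [dot3_smul3, hlX, hlY, hlZ]; simp
        first
        | linear_combination key
        | linear_combination -key
    · -- Coll Z Z1 Q
      obtain ⟨l, hl, hlX, hlY, hlZ⟩ := hline ![b1, -a1, 0] (by
        intro hw; apply hb1; simpa using congr_fun hw 0)
      refine ⟨l, hl, by simpa using hlZ, ?_, ?_⟩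
      · rw [hZ1d, dot3_smul2, hlX, hlY]; simp; ring
      · rw [dot3_smul3, hlX, hlY, hlZ]; simp; ring
end
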